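/- arXiv:2005.10341 — 3 statements merged into one kernel-verified Lean document; each statement's English description precedes it below -/
import Mathlib

section
/- Let λ be a partition of n that is a rectangle with at least two rows and at least two columns. Then there is exactly one tableau T ∈ SYT(λ) with maj(T) = C(n,2) − b(λ') − 2, where C(n,2) = n(n−1)/2. -/
open Finset MeasureTheory Filter ProbabilityTheory

/-- A standard Young tableau (standard filling) of an arbitrary finite set `s` of cells in
`ℕ × ℕ` (matrix/English coordinates: `c.1` is the row index, `c.2` the column index).
The entry of the cell `c` is `(toEquiv c : ℕ) + 1`, so the entries are `1, …, s.card`,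
each occurring exactly once, and entries strictly increase along rows (left to right)
and down columns. -/
structure SYTOf (s : Finset (ℕ × ℕ)) where
  toEquiv : {c : ℕ × ℕ // c ∈ s} ≃ Fin s.card
  row_lt : ∀ c c' : {c : ℕ × ℕ // c ∈ s},
    c.1.1 = c'.1.1 → c.1.2 < c'.1.2 → toEquiv c < toEquiv c'
  col_lt : ∀ c c' : {c : ℕ × ℕ // c ∈ s},
    c.1.2 = c'.1.2 → c.1.1 < c'.1.1 → toEquiv c < toEquiv c'

namespace SYTOf

variable {s : Finset (ℕ × ℕ)}

/-- `k ∈ {1, …, n-1}` is a descent of `T` if the entry `k + 1` appears in a strictly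
lower row than the entry `k`.  (The cell with entry `k` is `T.toEquiv.symm ⟨k - 1, _⟩`.) -/
def IsDescent (T : SYTOf s) (k : ℕ) : Prop :=
  ∃ h : k < s.card, 1 ≤ k ∧
    (T.toEquiv.symm ⟨k - 1, lt_of_le_of_lt (Nat.sub_le k 1) h⟩).1.1 <
      (T.toEquiv.symm ⟨k, h⟩).1.1

open scoped Classical in
/-- The major index of a standard Young tableau: the sum of its descents. -/
noncomputable def maj (T : SYTOf s) : ℕ :=
  ∑ k ∈ Finset.range s.card, if T.IsDescent k then k else 0

noncomputable instance : Fintype (SYTOf s) :=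
  Fintype.ofInjective toEquiv (fun T T' h => by cases T; cases T'; simpa using h)

end SYTOf

/-- The mean of the major index on `SYTOf s` under the uniform distribution. -/
noncomputable def sytMean (s : Finset (ℕ × ℕ)) : ℝ :=
  (∑ T : SYTOf s, (T.maj : ℝ)) / (Fintype.card (SYTOf s) : ℝ)

/-- The variance of the major index on `SYTOf s` under the uniform distribution. -/
noncomputable def sytVar (s : Finset (ℕ × ℕ)) : ℝ :=
  (∑ T : SYTOf s, ((T.maj : ℝ) - sytMean s) ^ 2) / (Fintype.card (SYTOf s) : ℝ)

/-- The cumulative distribution function of the normalized major index random variable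
`X* = (X − μ)/σ` on `SYTOf s` under the uniform distribution. -/
noncomputable def sytNormCDF (s : Finset (ℕ × ℕ)) (t : ℝ) : ℝ :=
  (Nat.card {T : SYTOf s // ((T.maj : ℝ) - sytMean s) / Real.sqrt (sytVar s) ≤ t} : ℝ) /
    (Fintype.card (SYTOf s) : ℝ)

/-- The cumulative distribution function of the standard normal distribution. -/
noncomputable def stdNormalCDF (t : ℝ) : ℝ :=
  ∫ x in Set.Iic t, Real.exp (-x ^ 2 / 2) / Real.sqrt (2 * Real.pi)

/-- `aft` of a partition: the number of cells outside the larger of the first row and the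
first column, i.e. `|λ| − max (λ₁, λ₁')`. -/
def aftY (μ : YoungDiagram) : ℕ := μ.card - max (μ.rowLen 0) (μ.colLen 0)

/-- `b(λ) = Σ (i − 1) λᵢ`, i.e. the sum over all cells of the (0-indexed) row index. -/
def bstat (μ : YoungDiagram) : ℕ := ∑ c ∈ μ.cells, c.1

/-- The hook length of the cell `c` in the cell set `s`: the number of cells of `s`
lying weakly to the right of `c` in its row or strictly below `c` in its column
(including `c` itself). -/
def skewHook (s : Finset (ℕ × ℕ)) (c : ℕ × ℕ) : ℕ :=
  (s.filter fun c' => (c'.1 = c.1 ∧ c.2 ≤ c'.2) ∨ (c'.2 = c.2 ∧ c.1 < c'.1)).card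

/-- The maximal number of cells of `s` contained in a single row or a single column. -/
def rowColMax (s : Finset (ℕ × ℕ)) : ℕ :=
  max (s.sup fun c => (s.filter fun c' => c'.1 = c.1).card)
      (s.sup fun c => (s.filter fun c' => c'.2 = c.2).card)

/-- `aft` of a skew shape (given by its cell set `s`): `|s| − m` where `m` is the maximal
number of cells of `s` in a single row or column. -/
def skewAft (s : Finset (ℕ × ℕ)) : ℕ := s.card - rowColMax s

namespace RectAux
open scoped Classical

def grid (a b : ℕ) : Finset (ℕ × ℕ) := Finset.range a ×ˢ Finset.range b

lemma grid_card (a b : ℕ) : (grid a b).card = a * b := by simp [grid]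

lemma mem_grid {a b : ℕ} {c : ℕ × ℕ} : c ∈ grid a b ↔ c.1 < a ∧ c.2 < b := by
  simp [grid, Finset.mem_product]

variable {a b : ℕ}

/-- position (cell) of the value `k` (entry `k+1`). -/
noncomputable def Pos (T : SYTOf (grid a b)) (k : ℕ) : ℕ × ℕ :=
  if h : k < (grid a b).card then ((T.toEquiv.symm ⟨k, h⟩ : {c // c ∈ grid a b}) : ℕ × ℕ)
  else (a, b)

lemma pos_def (T : SYTOf (grid a b)) {k : ℕ} (h : k < (grid a b).card) :
    Pos T k = (T.toEquiv.symm ⟨k, h⟩ : {c // c ∈ grid a b}).1 := by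
  simp [Pos, h]

lemma pos_mem (T : SYTOf (grid a b)) {k : ℕ} (h : k < a * b) : Pos T k ∈ grid a b := by
  have hc : k < (grid a b).card := by rwa [grid_card]
  rw [pos_def T hc]; exact (T.toEquiv.symm ⟨k, hc⟩).2

lemma pos_row_lt (T : SYTOf (grid a b)) {k l : ℕ} (hk : k < a * b) (hl : l < a * b)
    (hrow : (Pos T k).1 = (Pos T l).1) (hcol : (Pos T k).2 < (Pos T l).2) : k < l := by
  have hck : k < (grid a b).card := by rwa [grid_card]
  have hcl : l < (grid a b).card := by rwa [grid_card]
  rw [pos_def T hck, pos_def T hcl] at hrow hcol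
  have := T.row_lt _ _ hrow hcol
  simpa using this

lemma pos_col_lt (T : SYTOf (grid a b)) {k l : ℕ} (hk : k < a * b) (hl : l < a * b)
    (hcol : (Pos T k).2 = (Pos T l).2) (hrow : (Pos T k).1 < (Pos T l).1) : k < l := by
  have hck : k < (grid a b).card := by rwa [grid_card]
  have hcl : l < (grid a b).card := by rwa [grid_card]
  rw [pos_def T hck, pos_def T hcl] at hrow hcol
  have := T.col_lt _ _ hcol hrow
  simpa using this

lemma pos_inj (T : SYTOf (grid a b)) {k l : ℕ} (hk : k < a * b) (hl : l < a * b)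
    (h : Pos T k = Pos T l) : k = l := by
  have hck : k < (grid a b).card := by rwa [grid_card]
  have hcl : l < (grid a b).card := by rwa [grid_card]
  rw [pos_def T hck, pos_def T hcl] at h
  have h2 : T.toEquiv.symm ⟨k, hck⟩ = T.toEquiv.symm ⟨l, hcl⟩ := Subtype.ext h
  have := T.toEquiv.symm.injective h2
  simpa using this

lemma pos_surj (T : SYTOf (grid a b)) {c : ℕ × ℕ} (hc : c ∈ grid a b) :
    ∃ k, k < a * b ∧ Pos T k = c := by
  refine ⟨(T.toEquiv ⟨c, hc⟩ : Fin _), by rw [← grid_card a b]; exact (T.toEquiv ⟨c, hc⟩).isLt, ?_⟩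
  rw [pos_def T (T.toEquiv ⟨c, hc⟩).isLt]
  simp

lemma isDescent_iff (T : SYTOf (grid a b)) {k : ℕ} (hk1 : 1 ≤ k) (hk : k < a * b) :
    T.IsDescent k ↔ (Pos T (k - 1)).1 < (Pos T k).1 := by
  have hc : k < (grid a b).card := by rwa [grid_card]
  have hc' : k - 1 < (grid a b).card := lt_of_le_of_lt (Nat.sub_le k 1) hc
  rw [pos_def T hc, pos_def T hc']
  constructor
  · rintro ⟨h, -, hlt⟩; exact hlt
  · intro h; exact ⟨hc, hk1, h⟩

lemma not_isDescent_of_big (T : SYTOf (grid a b)) {k : ℕ} (hk : ¬ k < a * b) :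
    ¬ T.IsDescent k := by
  rintro ⟨h, -, -⟩; rw [grid_card] at h; exact hk h

/-- the set of non-descent positions ("comajor index support"). -/
noncomputable def NDS (T : SYTOf (grid a b)) : Finset ℕ :=
  (Finset.range (a * b)).filter (fun k => 1 ≤ k ∧ ¬ T.IsDescent k)

lemma mem_NDS (T : SYTOf (grid a b)) {k : ℕ} :
    k ∈ NDS T ↔ 1 ≤ k ∧ k < a * b ∧ ¬ (Pos T (k - 1)).1 < (Pos T k).1 := by
  unfold NDS
  rw [Finset.mem_filter, Finset.mem_range]
  constructor
  · rintro ⟨hr, h1, hnd⟩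
    exact ⟨h1, hr, by rwa [← isDescent_iff T h1 hr]⟩
  · rintro ⟨h1, hr, hnd⟩
    exact ⟨hr, h1, by rwa [isDescent_iff T h1 hr]⟩

lemma descent_of_not_mem_NDS (T : SYTOf (grid a b)) {k : ℕ} (h1 : 1 ≤ k) (hk : k < a * b)
    (h : k ∉ NDS T) : (Pos T (k - 1)).1 < (Pos T k).1 := by
  by_contra hc
  exact h ((mem_NDS T).2 ⟨h1, hk, hc⟩)

noncomputable def comaj (T : SYTOf (grid a b)) : ℕ :=
  ∑ k ∈ Finset.range ((grid a b).card), if T.IsDescent k then 0 else k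

lemma maj_add_comaj (T : SYTOf (grid a b)) : T.maj + comaj T = (a * b).choose 2 := by
  rw [SYTOf.maj, comaj, ← Finset.sum_add_distrib]
  have : ∀ k ∈ Finset.range ((grid a b).card),
      ((if T.IsDescent k then k else 0) + if T.IsDescent k then 0 else k) = k := by
    intro k _; split_ifs <;> omega
  rw [Finset.sum_congr rfl this, grid_card, Nat.choose_two_right,
    ← Finset.sum_range_id_mul_two (a * b)]
  omega

lemma comaj_eq_sum_NDS (T : SYTOf (grid a b)) : comaj T = ∑ e ∈ NDS T, e := by
  rw [comaj, NDS, Finset.sum_filter, grid_card]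
  refine Finset.sum_congr rfl fun k _ => ?_
  by_cases hd : T.IsDescent k
  · have h1 : 1 ≤ k := hd.2.1
    simp [hd]
  · by_cases h1 : 1 ≤ k
    · simp [hd, h1]
    · have : k = 0 := by omega
      simp [this, hd]



lemma sum_eq_sum_card (S : Finset ℕ) (M : ℕ) (hS : ∀ e ∈ S, e < M) :
    ∑ e ∈ S, e = ∑ v ∈ Finset.range M, (S.filter (fun e => v < e)).card := by
  classical
  have h1 : ∀ v, (S.filter (fun e => v < e)).card = ∑ e ∈ S, if v < e then 1 else 0 := by
    intro v; rw [Finset.card_filter]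
  calc ∑ e ∈ S, e = ∑ e ∈ S, ∑ v ∈ Finset.range M, (if v < e then 1 else 0) := by
        refine Finset.sum_congr rfl fun e he => ?_
        have : (Finset.range M).filter (fun v => v < e) = Finset.range e := by
          ext v; simp only [Finset.mem_filter, Finset.mem_range]
          exact ⟨fun h => h.2, fun h => ⟨lt_trans h (hS e he), h⟩⟩
        rw [← Finset.card_filter, this, Finset.card_range]
    _ = ∑ v ∈ Finset.range M, ∑ e ∈ S, (if v < e then 1 else 0) := Finset.sum_comm
    _ = _ := by refine Finset.sum_congr rfl fun v _ => (h1 v).symm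

lemma sum_div_eq (a d : ℕ) (ha : 0 < a) :
    ∑ w ∈ Finset.range (d * a), w / a = ∑ j ∈ Finset.range d, j * a := by
  induction d with
  | zero => simp
  | succ d ih =>
    have hsplit : ∑ w ∈ Finset.Ico 0 (d * a), (w / a) + ∑ w ∈ Finset.Ico (d * a) (d * a + a), (w / a)
        = ∑ w ∈ Finset.Ico 0 (d * a + a), (w / a) :=
      Finset.sum_Ico_consecutive _ (Nat.zero_le _) (Nat.le_add_right _ _)
    have h2 : ∑ w ∈ Finset.Ico (d * a) (d * a + a), (w / a) = a * d := by
      have hterm : ∀ w ∈ Finset.Ico (d * a) (d * a + a), w / a = d := by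
        intro w hw
        rw [Finset.mem_Ico] at hw
        have hcm : a * d = d * a := Nat.mul_comm a d
        obtain ⟨r, hr, rfl⟩ : ∃ r, r < a ∧ w = a * d + r := ⟨w - d * a, by omega, by omega⟩
        rw [Nat.mul_add_div ha, Nat.div_eq_of_lt hr]
        omega
      rw [Finset.sum_congr rfl hterm, Finset.sum_const, Nat.card_Ico, smul_eq_mul]
      have hcm : a * d = d * a := Nat.mul_comm a d
      have h3 : d * a + a - d * a = a := by omega
      rw [h3, Nat.mul_comm a d]
    have hr : (d + 1) * a = d * a + a := by ring
    have hcm : a * d = d * a := Nat.mul_comm a d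
    rw [hr, Finset.range_eq_Ico, ← hsplit, ← Finset.range_eq_Ico, Finset.sum_range_succ]
    omega

lemma sum_hfun (a d : ℕ) (ha : 0 < a) :
    ∑ v ∈ Finset.range (d * a), (d * a - 1 - v) / a = ∑ j ∈ Finset.range d, j * a := by
  rw [← sum_div_eq a d ha]
  exact Finset.sum_range_reflect (fun w => w / a) (d * a)

lemma card_multiples (a d : ℕ) (ha : 0 < a) :
    ((Finset.range (d * a)).filter (fun v => a ∣ v)).card = d := by
  have himg : (Finset.range (d * a)).filter (fun v => a ∣ v) = (Finset.range d).image (· * a) := by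
    ext v
    simp only [Finset.mem_filter, Finset.mem_range, Finset.mem_image]
    constructor
    · rintro ⟨hv, j, rfl⟩
      rw [Nat.mul_comm a j] at hv
      exact ⟨j, (Nat.mul_lt_mul_right ha).1 hv, (Nat.mul_comm a j).symm⟩
    · rintro ⟨j, hj, rfl⟩
      exact ⟨(Nat.mul_lt_mul_right ha).2 hj, j, (Nat.mul_comm a j).symm⟩
  rw [himg, Finset.card_image_of_injective _ (fun x y h => Nat.eq_of_mul_eq_mul_right ha h),
    Finset.card_range]


variable (T : SYTOf (grid a b))


lemma run_le {u v : ℕ} (huv : u ≤ v) (hv : v < a * b)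
    (hd : ∀ k, u < k → k ≤ v → k ∉ NDS T) :
    (Pos T u).1 + (v - u) ≤ (Pos T v).1 := by
  induction v with
  | zero =>
    obtain rfl : u = 0 := Nat.le_zero.1 huv
    simp
  | succ v ih =>
    rcases Nat.eq_or_lt_of_le huv with h | h
    · subst h; omega
    · have hv' : v < a * b := by omega
      have huv' : u ≤ v := by omega
      have step : (Pos T v).1 < (Pos T (v+1)).1 := by
        have := descent_of_not_mem_NDS T (k := v + 1) (by omega) hv (hd (v+1) (by omega) le_rfl)
        simpa using this
      have := ih huv' hv' (fun k hk1 hk2 => hd k hk1 (by omega))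
      omega

lemma window (ha : 0 < a) {u : ℕ} (hu : u + a < a * b) :
    ∃ e ∈ NDS T, u < e ∧ e ≤ u + a := by
  by_contra hcon
  push_neg at hcon
  have hd : ∀ k, u < k → k ≤ u + a → k ∉ NDS T := by
    intro k h1 h2 hmem
    exact absurd (hcon k hmem h1) (by omega)
  have := run_le T (u := u) (v := u + a) (by omega) hu hd
  have h2 := mem_grid.1 (pos_mem T (show u + a < a * b from hu))
  omega

lemma gbound (ha : 0 < a) {u : ℕ} (hu : u < a * b) :
    ∀ m v, u - v ≤ m → (u - v) / a ≤ ((NDS T).filter (fun e => v < e ∧ e ≤ u)).card := by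
  intro m
  induction m with
  | zero => intro v h; have : u - v = 0 := by omega
            rw [this]; simp
  | succ m ih =>
    intro v h
    by_cases hlt : u - v < a
    · rw [Nat.div_eq_of_lt hlt]; exact Nat.zero_le _
    · have hva : v + a ≤ u := by omega
      obtain ⟨e, he, hve, hea⟩ := window T ha (u := v) (by omega)
      have hkey : insert e ((NDS T).filter (fun x => e < x ∧ x ≤ u)) ⊆
          (NDS T).filter (fun x => v < x ∧ x ≤ u) := by
        intro x hx
        rw [Finset.mem_insert] at hx
        rcases hx with rfl | hx
        · exact Finset.mem_filter.2 ⟨he, hve, by omega⟩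
        · rw [Finset.mem_filter] at hx ⊢
          exact ⟨hx.1, by omega, hx.2.2⟩
      have hcard : ((NDS T).filter (fun x => e < x ∧ x ≤ u)).card + 1 ≤
          ((NDS T).filter (fun x => v < x ∧ x ≤ u)).card := by
        have hnot : e ∉ (NDS T).filter (fun x => e < x ∧ x ≤ u) := by
          simp only [Finset.mem_filter]; rintro ⟨-, h1, -⟩; omega
        have := Finset.card_le_card hkey
        rw [Finset.card_insert_of_notMem hnot] at this
        omega
      have hih := ih e (by omega)
      have hdiv : (u - v) / a ≤ (u - e) / a + 1 := by
        have h1 : u - v ≤ (u - e) + a := by omega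
        calc (u - v) / a ≤ ((u - e) + a) / a := Nat.div_le_div_right h1
          _ = (u - e) / a + 1 := by rw [Nat.add_div_right _ ha]
      omega



lemma no_nd_in_top (ha : 2 ≤ a) {d : ℕ} (hd : 3 ≤ d) (hdb : d ≤ b)
    (hsum : ∑ e ∈ (NDS T).filter (fun e => e ≤ d * a - 1), e
      = (∑ j ∈ Finset.range d, j * a) + 2) :
    ∀ e ∈ NDS T, e ≤ d * a - 1 → e ≤ (d - 1) * a := by
  classical
  by_contra hcon
  push_neg at hcon
  obtain ⟨e', heN, heu, hegt⟩ := hcon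
  set u := d * a - 1 with hu_def
  have ha0 : 0 < a := by omega
  have hda : (d - 1) * a + a = d * a := by
    have : d - 1 + 1 = d := by omega
    calc (d - 1) * a + a = (d - 1 + 1) * a := by ring
      _ = d * a := by rw [this]
  have hdab : d * a ≤ a * b := by
    calc d * a ≤ b * a := Nat.mul_le_mul_right a hdb
      _ = a * b := Nat.mul_comm b a
  have hu_lt : u < a * b := by omega
  set S := (NDS T).filter (fun e => e ≤ u) with hS_def
  have hSlt : ∀ e ∈ S, e < d * a := by
    intro e he; rw [hS_def, Finset.mem_filter] at he; omega
  have hsum2 : ∑ e ∈ S, e = ∑ v ∈ Finset.range (d * a), (S.filter (fun e => v < e)).card :=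
    sum_eq_sum_card S (d * a) hSlt
  have hgf : ∀ v, S.filter (fun e => v < e) = (NDS T).filter (fun e => v < e ∧ e ≤ u) := by
    intro v; rw [hS_def, Finset.filter_filter]
    apply Finset.filter_congr; intro x _; exact and_comm
  -- pointwise lower bound
  have hg : ∀ v, (u - v) / a ≤ (S.filter (fun e => v < e)).card := by
    intro v; rw [hgf v]; exact gbound T ha0 hu_lt (u - v) v le_rfl
  -- improved bound at multiples of a
  have hextra : ∀ v, v < d * a → a ∣ v → (u - v) / a + 1 ≤ (S.filter (fun e => v < e)).card := by
    intro v hvda ⟨j, hj⟩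
    have hja : a * j = j * a := Nat.mul_comm a j
    have hjd : j ≤ d - 1 := by
      by_contra hcon2
      have : d * a ≤ j * a := Nat.mul_le_mul_right a (by omega)
      omega
    have hjd1 : j * a ≤ (d - 1) * a := Nat.mul_le_mul_right a hjd
    have hv_le : v ≤ (d - 1) * a := by omega
    have hee : e' - 1 < a * b := by omega
    -- card (v < · ≤ e'-1) ≥ (e'-1-v)/a
    have h1 : (e' - 1 - v) / a ≤ ((NDS T).filter (fun x => v < x ∧ x ≤ e' - 1)).card :=
      gbound T ha0 hee (e' - 1 - v) v le_rfl
    -- insert e'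
    have hins : insert e' ((NDS T).filter (fun x => v < x ∧ x ≤ e' - 1)) ⊆
        (NDS T).filter (fun x => v < x ∧ x ≤ u) := by
      intro x hx
      rw [Finset.mem_insert] at hx
      rcases hx with rfl | hx
      · exact Finset.mem_filter.2 ⟨heN, by omega, heu⟩
      · rw [Finset.mem_filter] at hx ⊢
        exact ⟨hx.1, hx.2.1, by omega⟩
    have hnot : e' ∉ (NDS T).filter (fun x => v < x ∧ x ≤ e' - 1) := by
      simp only [Finset.mem_filter]; rintro ⟨-, -, h2⟩; omega
    have hcard : ((NDS T).filter (fun x => v < x ∧ x ≤ e' - 1)).card + 1 ≤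
        ((NDS T).filter (fun x => v < x ∧ x ≤ u)).card := by
      have := Finset.card_le_card hins
      rw [Finset.card_insert_of_notMem hnot] at this
      omega
    -- (u - v)/a ≤ d-1-j  and  d-1-j ≤ (e'-1-v)/a
    have hq1 : (u - v) / a ≤ d - 1 - j := by
      have e1 : (d - 1 - j + 1) * a = (d - 1 - j) * a + a := by ring
      have e2 : (d - 1 - j) * a = (d - 1) * a - j * a := Nat.sub_mul _ _ _
      have h2 : u - v < (d - 1 - j + 1) * a := by omega
      have := (Nat.div_lt_iff_lt_mul ha0).2 h2
      omega
    have hq2 : d - 1 - j ≤ (e' - 1 - v) / a := by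
      rw [Nat.le_div_iff_mul_le ha0]
      have : (d - 1 - j) * a = (d - 1) * a - j * a := Nat.sub_mul _ _ _
      omega
    rw [hgf v]
    omega
  -- sum of bounds
  have hsumbound : ∑ v ∈ Finset.range (d * a), ((u - v) / a + if a ∣ v then 1 else 0)
      ≤ ∑ v ∈ Finset.range (d * a), (S.filter (fun e => v < e)).card := by
    apply Finset.sum_le_sum
    intro v hv
    rw [Finset.mem_range] at hv
    by_cases hdvd : a ∣ v
    · simpa [hdvd] using hextra v hv hdvd
    · simpa [hdvd] using hg v
  have hsplit : ∑ v ∈ Finset.range (d * a), ((u - v) / a + if a ∣ v then 1 else 0)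
      = (∑ j ∈ Finset.range d, j * a) + d := by
    rw [Finset.sum_add_distrib]
    congr 1
    · rw [← sum_hfun a d ha0]
    · rw [← Finset.card_filter, card_multiples a d ha0]
  rw [← hsum2, hsum] at hsumbound
  omega


lemma col_full (ha : 2 ≤ a) {d : ℕ} (hd : 3 ≤ d) (hdb : d ≤ b)
    (hQ : ∀ j i, d ≤ j → j < b → i < a → Pos T (j * a + i) = (i, j))
    (hsum : ∑ e ∈ (NDS T).filter (fun e => e ≤ d * a - 1), e
      = (∑ j ∈ Finset.range d, j * a) + 2) :
    (∀ j i, d - 1 ≤ j → j < b → i < a → Pos T (j * a + i) = (i, j)) ∧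
    (∑ e ∈ (NDS T).filter (fun e => e ≤ (d - 1) * a - 1), e
      = (∑ j ∈ Finset.range (d - 1), j * a) + 2) := by
  classical
  have ha0 : 0 < a := by omega
  have hda : (d - 1) * a + a = d * a := by
    have h1 : d - 1 + 1 = d := by omega
    calc (d - 1) * a + a = (d - 1 + 1) * a := by ring
      _ = d * a := by rw [h1]
  have hdab : d * a ≤ a * b := by
    calc d * a ≤ b * a := Nat.mul_le_mul_right a hdb
      _ = a * b := Nat.mul_comm b a
  -- (a) small values lie in columns < d
  have hsmallcol : ∀ k, k < d * a → (Pos T k).2 < d := by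
    intro k hk
    have hkab : k < a * b := lt_of_lt_of_le hk hdab
    by_contra hc
    push_neg at hc
    have hmem := mem_grid.1 (pos_mem T hkab)
    have hQk := hQ (Pos T k).2 (Pos T k).1 hc hmem.2 hmem.1
    have hlt : (Pos T k).2 * a + (Pos T k).1 < a * b := by
      have h1 : (Pos T k).2 * a + (Pos T k).1 < ((Pos T k).2 + 1) * a := by
        have : ((Pos T k).2 + 1) * a = (Pos T k).2 * a + a := by ring
        omega
      have h2 : ((Pos T k).2 + 1) * a ≤ b * a := Nat.mul_le_mul_right a (by omega)
      have h3 : b * a = a * b := Nat.mul_comm b a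
      omega
    have := pos_inj T hlt hkab (by rw [hQk])
    have hge : d * a ≤ (Pos T k).2 * a := Nat.mul_le_mul_right a hc
    omega
  -- (b) cells in columns < d contain small values
  have hcellsmall : ∀ r c, r < a → c < d → ∃ k, k < d * a ∧ Pos T k = (r, c) := by
    intro r c hr hc
    obtain ⟨k, hk, hpk⟩ := pos_surj T (c := (r, c)) (mem_grid.2 ⟨hr, by omega⟩)
    refine ⟨k, ?_, hpk⟩
    by_contra hge
    push_neg at hge
    have hi : k % a < a := Nat.mod_lt _ ha0
    have hj2 : k / a < b := by
      rw [Nat.div_lt_iff_lt_mul ha0]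
      calc k < a * b := hk
        _ = b * a := Nat.mul_comm a b
    have hj1 : d ≤ k / a := by
      rw [Nat.le_div_iff_mul_le ha0]
      calc d * a ≤ k := hge
        _ = k := rfl
    have hQk := hQ (k / a) (k % a) hj1 hj2 hi
    have hmk : k / a * a + k % a = k := by
      have := Nat.div_add_mod k a
      have hcm : a * (k / a) = k / a * a := Nat.mul_comm _ _
      omega
    rw [hmk, hpk] at hQk
    have : c = k / a := congrArg Prod.snd hQk
    omega
  -- (c) no non-descents strictly above (d-1)*a
  have hnotop := no_nd_in_top T ha hd hdb hsum
  set v0 := (d - 1) * a with hv0_def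
  have hv01 : 1 ≤ v0 := by
    have : 2 * a ≤ (d - 1) * a := Nat.mul_le_mul_right a (by omega)
    omega
  have hv0ab : v0 < a * b := by omega
  have hdesc : ∀ k, v0 < k → k ≤ d * a - 1 → k ∉ NDS T := by
    intro k h1 h2 hm
    have := hnotop k hm h2
    omega
  -- (d) rows along the top run
  have hrowbd : ∀ k, k < a * b → (Pos T k).1 < a := fun k hk => (mem_grid.1 (pos_mem T hk)).1
  have hrun1 := run_le T (u := v0) (v := d * a - 1) (by omega) (by omega) hdesc
  have hrow0 : (Pos T v0).1 = 0 := by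
    have := hrowbd (d * a - 1) (by omega)
    omega
  have hrowi : ∀ i, i < a → (Pos T (v0 + i)).1 = i := by
    intro i hi
    have h1 := run_le T (u := v0) (v := v0 + i) (by omega) (by omega)
      (fun k hk1 hk2 => hdesc k hk1 (by omega))
    have h2 := run_le T (u := v0 + i) (v := d * a - 1) (by omega) (by omega)
      (fun k hk1 hk2 => hdesc k (by omega) hk2)
    have h3 := hrowbd (d * a - 1) (by omega)
    omega
  -- (e) the value v0 sits at cell (0, d-1)
  have hcol0 : Pos T v0 = (0, d - 1) := by
    have hc_lt : (Pos T v0).2 < d := hsmallcol v0 (by omega)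
    by_cases hc : (Pos T v0).2 = d - 1
    · have : Pos T v0 = ((Pos T v0).1, (Pos T v0).2) := rfl
      rw [this, hrow0, hc]
    · have hclt : (Pos T v0).2 + 1 < d := by omega
      obtain ⟨l, hl, hpl⟩ := hcellsmall 0 ((Pos T v0).2 + 1) (by omega) hclt
      have hless : v0 < l := by
        apply pos_row_lt T hv0ab (by omega)
        · rw [hpl, hrow0]
        · rw [hpl]; simp
      have hi : l - v0 < a := by omega
      have := hrowi (l - v0) hi
      have hl_eq : v0 + (l - v0) = l := by omega
      rw [hl_eq, hpl] at this
      simp at this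
      omega
  -- (f) the whole last column
  have hcoli : ∀ i, i < a → Pos T (v0 + i) = (i, d - 1) := by
    intro i hi
    rcases Nat.eq_zero_or_pos i with rfl | hipos
    · simpa using hcol0
    · obtain ⟨l, hl, hpl⟩ := hcellsmall i (d - 1) hi (by omega)
      have hless : v0 < l := by
        apply pos_col_lt T hv0ab (by omega)
        · rw [hpl, hcol0]
        · rw [hpl, hcol0]; exact hipos
      have hilt : l - v0 < a := by omega
      have hr := hrowi (l - v0) hilt
      have hl_eq : v0 + (l - v0) = l := by omega
      rw [hl_eq, hpl] at hr
      simp at hr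
      have hveq : v0 + i = l := by omega
      rw [hveq]
      exact hpl
  constructor
  · intro j i hj1 hj2 hi
    rcases Nat.lt_or_ge j d with hjd | hjd
    · have hjeq : j = d - 1 := by omega
      subst hjeq
      exact hcoli i hi
    · exact hQ j i hjd hj2 hi
  -- (i) the sum identity for width d-1
  · have hv0mem : v0 ∈ NDS T := by
      rw [mem_NDS]
      refine ⟨hv01, hv0ab, ?_⟩
      rw [hrow0]
      omega
    have hsplit : (NDS T).filter (fun e => e ≤ d * a - 1)
        = insert v0 ((NDS T).filter (fun e => e ≤ v0 - 1)) := by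
      ext e
      rw [Finset.mem_insert, Finset.mem_filter, Finset.mem_filter]
      constructor
      · rintro ⟨he, heu⟩
        have := hnotop e he heu
        rcases Nat.eq_or_lt_of_le this with h | h
        · exact Or.inl h
        · exact Or.inr ⟨he, by omega⟩
      · rintro (rfl | ⟨he, heu⟩)
        · exact ⟨hv0mem, by omega⟩
        · exact ⟨he, by omega⟩
    have hnotmem : v0 ∉ (NDS T).filter (fun e => e ≤ v0 - 1) := by
      simp only [Finset.mem_filter]
      rintro ⟨-, h⟩; omega
    rw [hsplit, Finset.sum_insert hnotmem] at hsum
    have hBd : ∑ j ∈ Finset.range d, j * a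
        = (∑ j ∈ Finset.range (d - 1), j * a) + (d - 1) * a := by
      conv_lhs => rw [show d = (d - 1) + 1 by omega]
      rw [Finset.sum_range_succ]
    omega

lemma cols_down (ha : 2 ≤ a) (hb : 2 ≤ b)
    (hcomaj : comaj T = (∑ j ∈ Finset.range b, j * a) + 2) :
    ∀ m, m ≤ b - 2 →
      (∀ j i, b - m ≤ j → j < b → i < a → Pos T (j * a + i) = (i, j)) ∧
      (∑ e ∈ (NDS T).filter (fun e => e ≤ (b - m) * a - 1), e
        = (∑ j ∈ Finset.range (b - m), j * a) + 2) := by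
  intro m
  induction m with
  | zero =>
    intro _
    simp only [Nat.sub_zero]
    constructor
    · intro j i h1 h2; omega
    · have hfilt : (NDS T).filter (fun e => e ≤ b * a - 1) = NDS T := by
        apply Finset.filter_true_of_mem
        intro e he
        have h1 := (mem_NDS T).1 he
        have h2 : a * b = b * a := Nat.mul_comm a b
        omega
      rw [hfilt, ← comaj_eq_sum_NDS]
      simpa using hcomaj
  | succ m ih =>
    intro hm
    obtain ⟨hQ, hsum⟩ := ih (by omega)
    have hd : 3 ≤ b - m := by omega
    have hcf := col_full T ha hd (by omega) hQ hsum
    have heq : b - m - 1 = b - (m + 1) := by omega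
    rw [heq] at hcf
    exact hcf

lemma pos_zero (ha : 0 < a) (hb : 0 < b) : Pos T 0 = (0, 0) := by
  have h0ab : 0 < a * b := Nat.mul_pos ha hb
  have hmem := mem_grid.1 (pos_mem T h0ab)
  have hc : (Pos T 0).2 = 0 := by
    by_contra hc
    obtain ⟨l, hl, hpl⟩ := pos_surj T (c := ((Pos T 0).1, (Pos T 0).2 - 1))
      (mem_grid.2 ⟨hmem.1, by omega⟩)
    have : l < 0 := by
      apply pos_row_lt T hl h0ab
      · rw [hpl]
      · rw [hpl]; simp; omega
    omega
  have hr : (Pos T 0).1 = 0 := by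
    by_contra hr
    obtain ⟨l, hl, hpl⟩ := pos_surj T (c := ((Pos T 0).1 - 1, (Pos T 0).2))
      (mem_grid.2 ⟨by omega, hmem.2⟩)
    have : l < 0 := by
      apply pos_col_lt T hl h0ab
      · rw [hpl]
      · rw [hpl]; simp; omega
    omega
  have : Pos T 0 = ((Pos T 0).1, (Pos T 0).2) := rfl
  rw [this, hr, hc]

lemma small_block (ha0 : 0 < a) {d : ℕ} (hdb : d ≤ b)
    (hQ : ∀ j i, d ≤ j → j < b → i < a → Pos T (j * a + i) = (i, j)) :
    (∀ k, k < d * a → (Pos T k).2 < d) ∧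
    (∀ r c, r < a → c < d → ∃ k, k < d * a ∧ Pos T k = (r, c)) := by
  have hdab : d * a ≤ a * b := by
    calc d * a ≤ b * a := Nat.mul_le_mul_right a hdb
      _ = a * b := Nat.mul_comm b a
  constructor
  · intro k hk
    have hkab : k < a * b := lt_of_lt_of_le hk hdab
    by_contra hc
    push_neg at hc
    have hmem := mem_grid.1 (pos_mem T hkab)
    have hQk := hQ (Pos T k).2 (Pos T k).1 hc hmem.2 hmem.1
    have hlt : (Pos T k).2 * a + (Pos T k).1 < a * b := by
      have h1 : ((Pos T k).2 + 1) * a = (Pos T k).2 * a + a := by ring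
      have h2 : ((Pos T k).2 + 1) * a ≤ b * a := Nat.mul_le_mul_right a (by omega)
      have h3 : b * a = a * b := Nat.mul_comm b a
      omega
    have := pos_inj T hlt hkab (by rw [hQk])
    have hge : d * a ≤ (Pos T k).2 * a := Nat.mul_le_mul_right a hc
    omega
  · intro r c hr hc
    obtain ⟨k, hk, hpk⟩ := pos_surj T (c := (r, c)) (mem_grid.2 ⟨hr, by omega⟩)
    refine ⟨k, ?_, hpk⟩
    by_contra hge
    push_neg at hge
    have hi : k % a < a := Nat.mod_lt _ ha0
    have hj2 : k / a < b := by
      rw [Nat.div_lt_iff_lt_mul ha0]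
      calc k < a * b := hk
        _ = b * a := Nat.mul_comm a b
    have hj1 : d ≤ k / a := by
      rw [Nat.le_div_iff_mul_le ha0]
      exact hge
    have hQk := hQ (k / a) (k % a) hj1 hj2 hi
    have hmk : k / a * a + k % a = k := by
      have := Nat.div_add_mod k a
      have hcm : a * (k / a) = k / a * a := Nat.mul_comm _ _
      omega
    rw [hmk, hpk] at hQk
    have : c = k / a := congrArg Prod.snd hQk
    omega

lemma base_two (ha : 2 ≤ a) (hb : 2 ≤ b)
    (hQ2 : ∀ j i, 2 ≤ j → j < b → i < a → Pos T (j * a + i) = (i, j))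
    (hsum2 : ∑ e ∈ (NDS T).filter (fun e => e ≤ 2 * a - 1), e
      = (∑ j ∈ Finset.range 2, j * a) + 2) :
    (Pos T 0 = (0, 0)) ∧ (Pos T 1 = (0, 1)) ∧
    (∀ i, 1 ≤ i → i < a → Pos T (1 + i) = (i, 0)) ∧
    (∀ i, 1 ≤ i → i < a → Pos T (a + i) = (i, 1)) := by
  classical
  have ha0 : 0 < a := by omega
  have hil : ∑ j ∈ Finset.range 2, j * a = a := by
    rw [Finset.sum_range_succ, Finset.sum_range_succ]; simp
  rw [hil] at hsum2
  have h2ab : 2 * a ≤ a * b := by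
    calc 2 * a ≤ b * a := Nat.mul_le_mul_right a hb
      _ = a * b := Nat.mul_comm b a
  obtain ⟨hsmallcol, hcellsmall⟩ := small_block T ha0 hb hQ2
  have hp0 : Pos T 0 = (0, 0) := pos_zero T ha0 (by omega)
  set S := (NDS T).filter (fun e => e ≤ 2 * a - 1) with hS_def
  have hmemS : ∀ e ∈ S, 1 ≤ e ∧ e < a * b ∧ e ≤ 2 * a - 1 ∧ e ∈ NDS T := by
    intro e he
    rw [hS_def, Finset.mem_filter] at he
    have := (mem_NDS T).1 he.1
    exact ⟨this.1, this.2.1, he.2, he.1⟩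
  obtain ⟨e, heN, he0, hea⟩ := window T ha0 (u := 0) (by omega)
  obtain ⟨e', heN', he0', hea'⟩ := window T ha0 (u := a - 1) (by omega)
  have heS : e ∈ S := by rw [hS_def, Finset.mem_filter]; exact ⟨heN, by omega⟩
  have heS' : e' ∈ S := by rw [hS_def, Finset.mem_filter]; exact ⟨heN', by omega⟩
  have hposS : ∀ x ∈ S, 1 ≤ x := fun x hx => (hmemS x hx).1
  -- case distinction on whether a is a non-descent
  by_cases hamem : a ∈ S
  · -- In this case we show S = {2, a} and derive a contradiction
    exfalso
    have herase : a + ∑ x ∈ S.erase a, x = a + 2 := by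
      rw [Finset.add_sum_erase S (fun x => x) hamem, hsum2]
    have hsum_er : ∑ x ∈ S.erase a, x = 2 := by omega
    have hboundsr : ∀ x ∈ S.erase a, 1 ≤ x ∧ x ≤ 2 ∧ x ≠ a := by
      intro x hx
      have hx' := Finset.mem_of_mem_erase hx
      refine ⟨hposS x hx', ?_, Finset.ne_of_mem_erase hx⟩
      have hle : x ≤ ∑ y ∈ S.erase a, y := by
        simpa using Finset.single_le_sum (f := fun y => y) (fun i _ => Nat.zero_le i) hx
      omega
    have h1notin : 1 ∉ S.erase a := by
      intro h1
      have h2 : 1 + ∑ x ∈ (S.erase a).erase 1, x = 2 := by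
        rw [Finset.add_sum_erase _ (fun x => x) h1, hsum_er]
      have hempty : (S.erase a).erase 1 = ∅ := by
        rw [Finset.eq_empty_iff_forall_notMem]
        intro x hx
        have hx1 := Finset.ne_of_mem_erase hx
        have hx2 := hboundsr x (Finset.mem_of_mem_erase hx)
        have hle : x ≤ ∑ y ∈ (S.erase a).erase 1, y := by
          simpa using Finset.single_le_sum (f := fun y => y) (fun i _ => Nat.zero_le i) hx
        omega
      rw [hempty] at h2
      simp at h2
    have hsub2 : S.erase a ⊆ {2} := by
      intro x hx
      have := hboundsr x hx
      have hne1 : x ≠ 1 := fun h => h1notin (h ▸ hx)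
      rw [Finset.mem_singleton]
      omega
    have h2er : 2 ∈ S.erase a := by
      rcases Finset.subset_singleton_iff.1 hsub2 with h | h
      · rw [h] at hsum_er; simp at hsum_er
      · rw [h]; exact Finset.mem_singleton_self 2
    have h2S : 2 ∈ S := Finset.mem_of_mem_erase h2er
    have hS_sub : ∀ x ∈ S, x = 2 ∨ x = a := by
      intro x hx
      by_cases hxa : x = a
      · exact Or.inr hxa
      · exact Or.inl (Finset.mem_singleton.1 (hsub2 (Finset.mem_erase.2 ⟨hxa, hx⟩)))
    have ha3 : 3 ≤ a := by
      by_contra hcon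
      have ha2 : a = 2 := by omega
      have : S ⊆ {2} := by
        intro x hx; rcases hS_sub x hx with h | h <;> simp [h, ha2]
      rcases Finset.subset_singleton_iff.1 this with h | h <;>
        rw [h] at hsum2 <;> simp at hsum2 <;> omega
    -- value 1 is at cell (1,0)
    have h1nd : 1 ∉ NDS T := by
      intro h
      have h1S : 1 ∈ S := by rw [hS_def, Finset.mem_filter]; exact ⟨h, by omega⟩
      rcases hS_sub 1 h1S with h | h <;> omega
    have hd1 : 0 < (Pos T 1).1 := by
      have := descent_of_not_mem_NDS T (k := 1) le_rfl (by omega) h1nd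
      simpa [hp0] using this
    have hmem1 := mem_grid.1 (pos_mem T (show 1 < a * b by omega))
    have hc1 : (Pos T 1).2 = 0 := by
      by_contra hc
      obtain ⟨l, hl, hpl⟩ := pos_surj T (c := ((Pos T 1).1, (Pos T 1).2 - 1))
        (mem_grid.2 ⟨hmem1.1, by omega⟩)
      have hlt1 : l < 1 := by
        apply pos_row_lt T hl (by omega)
        · rw [hpl]
        · rw [hpl]; simp; omega
      have hl0 : l = 0 := by omega
      rw [hl0, hp0] at hpl
      have := congrArg Prod.fst hpl
      simp at this
      omega
    have hr1 : (Pos T 1).1 = 1 := by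
      by_contra hr
      obtain ⟨l, hl, hpl⟩ := pos_surj T (c := ((Pos T 1).1 - 1, 0))
        (mem_grid.2 ⟨by omega, by omega⟩)
      have hlt1 : l < 1 := by
        apply pos_col_lt T hl (by omega)
        · rw [hpl, hc1]
        · rw [hpl]; simp; omega
      have hl0 : l = 0 := by omega
      rw [hl0, hp0] at hpl
      have := congrArg Prod.fst hpl
      simp at this
      omega
    have hpos1 : Pos T 1 = (1, 0) := by
      have : Pos T 1 = ((Pos T 1).1, (Pos T 1).2) := rfl
      rw [this, hr1, hc1]
    -- values a..2a-1 are a run of descents, so value a is in row 0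
    have hdhi : ∀ k, a < k → k ≤ 2 * a - 1 → k ∉ NDS T := by
      intro k h1 h2 hm
      have hkS : k ∈ S := by rw [hS_def, Finset.mem_filter]; exact ⟨hm, by omega⟩
      rcases hS_sub k hkS with h | h <;> omega
    have hruna := run_le T (u := a) (v := 2 * a - 1) (by omega) (by omega) hdhi
    have hrowbd : ∀ k, k < a * b → (Pos T k).1 < a := fun k hk => (mem_grid.1 (pos_mem T hk)).1
    have hra : (Pos T a).1 = 0 := by
      have := hrowbd (2 * a - 1) (by omega)
      omega
    have hca : (Pos T a).2 = 1 := by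
      have hca2 : (Pos T a).2 < 2 := hsmallcol a (by omega)
      by_contra hc
      have hc0 : (Pos T a).2 = 0 := by omega
      have : Pos T a = (0, 0) := by
        have h0 : Pos T a = ((Pos T a).1, (Pos T a).2) := rfl
        rw [h0, hra, hc0]
      have := pos_inj T (show a < a * b by omega) (show 0 < a * b by omega) (by rw [this, hp0])
      omega
    -- value 2 must be at (1,1)
    have h2nds : 2 ∈ NDS T := (Finset.mem_filter.1 h2S).1
    have hr2le : (Pos T 2).1 ≤ 1 := by
      have := (mem_NDS T).1 h2nds
      have h21 : (2 : ℕ) - 1 = 1 := rfl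
      rw [h21, hr1] at this
      omega
    have hc2lt : (Pos T 2).2 < 2 := hsmallcol 2 (by omega)
    have hr2 : (Pos T 2).1 = 1 := by
      by_contra hr
      have hr0 : (Pos T 2).1 = 0 := by omega
      rcases (show (Pos T 2).2 = 0 ∨ (Pos T 2).2 = 1 by omega) with hc0 | hc1
      · have : Pos T 2 = (0, 0) := by
          have h0 : Pos T 2 = ((Pos T 2).1, (Pos T 2).2) := rfl
          rw [h0, hr0, hc0]
        have := pos_inj T (show 2 < a * b by omega) (show 0 < a * b by omega) (by rw [this, hp0])
        omega
      · have hpa : Pos T a = (0, 1) := by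
          have h0 : Pos T a = ((Pos T a).1, (Pos T a).2) := rfl
          rw [h0, hra, hca]
        have : Pos T 2 = (0, 1) := by
          have h0 : Pos T 2 = ((Pos T 2).1, (Pos T 2).2) := rfl
          rw [h0, hr0, hc1]
        have := pos_inj T (show 2 < a * b by omega) (show a < a * b by omega) (by rw [this, hpa])
        omega
    have hc2 : (Pos T 2).2 = 1 := by
      by_contra hc
      have hc0 : (Pos T 2).2 = 0 := by omega
      have : Pos T 2 = (1, 0) := by
        have h0 : Pos T 2 = ((Pos T 2).1, (Pos T 2).2) := rfl
        rw [h0, hr2, hc0]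
      have := pos_inj T (show 2 < a * b by omega) (show 1 < a * b by omega) (by rw [this, hpos1])
      omega
    -- contradiction via the column order between (0,1) and (1,1)
    have : a < 2 := by
      apply pos_col_lt T (show a < a * b by omega) (show 2 < a * b by omega)
      · rw [hca, hc2]
      · rw [hra, hr2]; omega
    omega
  · -- main case : S = {1, a+1}
    have he_lt : e < a := by
      by_cases h : e = a
      · exfalso; apply hamem; rwa [h] at heS
      · omega
    have he_gt : a + 1 ≤ e' := by
      by_cases h : e' = a
      · exfalso; apply hamem; rwa [h] at heS'
      · omega
    have hee' : e ≠ e' := by omega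
    have hpairsum : e + e' ≤ a + 2 := by
      have hsub : {e, e'} ⊆ S := by
        intro x hx
        rcases Finset.mem_insert.1 hx with rfl | hx
        · exact heS
        · rw [Finset.mem_singleton.1 hx]; exact heS'
      have h5 := Finset.sum_le_sum_of_subset (f := fun x => x) hsub
      rw [Finset.sum_pair hee'] at h5
      have h6 : e + e' ≤ ∑ x ∈ S, x := by simpa using h5
      omega
    have he1 : e = 1 := by omega
    have he'a : e' = a + 1 := by omega
    subst he1; subst he'a
    have hSeq : S = {1, a + 1} := by
      apply Finset.Subset.antisymm
      · intro x hx
        by_contra hxn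
        have hxsub : insert x ({1, a + 1} : Finset ℕ) ⊆ S := by
          intro y hy
          rcases Finset.mem_insert.1 hy with rfl | hy
          · exact hx
          · rcases Finset.mem_insert.1 hy with rfl | hy
            · exact heS
            · rw [Finset.mem_singleton.1 hy]; exact heS'
        have hxne : x ∉ ({1, a + 1} : Finset ℕ) := hxn
        have hsum3 := Finset.sum_le_sum_of_subset (f := fun x => x) hxsub
        rw [Finset.sum_insert hxne, Finset.sum_pair (show (1:ℕ) ≠ a + 1 by omega)] at hsum3
        have hsum4 : x + (1 + (a + 1)) ≤ ∑ y ∈ S, y := by simpa using hsum3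
        have hx1 := hposS x hx
        omega
      · intro x hx
        rcases Finset.mem_insert.1 hx with rfl | hx
        · exact heS
        · rw [Finset.mem_singleton.1 hx]; exact heS'
    have h1nds : 1 ∈ NDS T := heN
    have ha1nds : a + 1 ∈ NDS T := heN'
    have hnotnd : ∀ k, 1 ≤ k → k ≤ 2 * a - 1 → k ≠ 1 → k ≠ a + 1 → k ∉ NDS T := by
      intro k h1 h2 h3 h4 hm
      have hkS : k ∈ S := by rw [hS_def, Finset.mem_filter]; exact ⟨hm, h2⟩
      rw [hSeq] at hkS
      rcases Finset.mem_insert.1 hkS with h | h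
      · exact h3 h
      · exact h4 (Finset.mem_singleton.1 h)
    have hrowbd : ∀ k, k < a * b → (Pos T k).1 < a := fun k hk => (mem_grid.1 (pos_mem T hk)).1
    -- value 1 at (0,1)
    have hr1 : (Pos T 1).1 = 0 := by
      have := (mem_NDS T).1 h1nds
      have h10 : (1 : ℕ) - 1 = 0 := rfl
      rw [h10, hp0] at this
      simp at this
      omega
    have hc1lt : (Pos T 1).2 < 2 := hsmallcol 1 (by omega)
    have hpos1 : Pos T 1 = (0, 1) := by
      have hc1 : (Pos T 1).2 = 1 := by
        by_contra hc
        have hc0 : (Pos T 1).2 = 0 := by omega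
        have heq : Pos T 1 = (0, 0) := by
          have h0 : Pos T 1 = ((Pos T 1).1, (Pos T 1).2) := rfl
          rw [h0, hr1, hc0]
        have := pos_inj T (show 1 < a * b by omega) (show 0 < a * b by omega) (by rw [heq, hp0])
        omega
      have h0 : Pos T 1 = ((Pos T 1).1, (Pos T 1).2) := rfl
      rw [h0, hr1, hc1]
    -- run A : values 1 .. a occupy rows 0 .. a-1
    have hdA : ∀ k, 1 < k → k ≤ a → k ∉ NDS T := by
      intro k h1 h2
      exact hnotnd k (by omega) (by omega) (by omega) (by omega)
    have hrowA : ∀ i, i ≤ a - 1 → (Pos T (1 + i)).1 = i := by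
      intro i hi
      have h1 := run_le T (u := 1) (v := 1 + i) (by omega) (by omega)
        (fun k hk1 hk2 => hdA k hk1 (by omega))
      have h2 := run_le T (u := 1 + i) (v := a) (by omega) (by omega)
        (fun k hk1 hk2 => hdA k (by omega) hk2)
      have h3 := hrowbd a (by omega)
      omega
    -- columns of run A
    have hposA : ∀ i, 1 ≤ i → i < a → Pos T (1 + i) = (i, 0) := by
      intro i hi1 hi2
      have hrow := hrowA i (by omega)
      have hcolA : (Pos T (1 + i)).2 < 2 := hsmallcol (1 + i) (by omega)
      have hc0 : (Pos T (1 + i)).2 = 0 := by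
        by_contra hc
        obtain ⟨l, hl, hpl⟩ := hcellsmall i 0 hi2 (by omega)
        have hless : l < 1 + i := by
          apply pos_row_lt T (by omega) (show 1 + i < a * b by omega)
          · rw [hpl, hrow]
          · rw [hpl]; simp; omega
        -- but every value < 1+i has row ≠ i
        have hrl : (Pos T l).1 = i := by rw [hpl]
        rcases Nat.eq_zero_or_pos l with rfl | hl0
        · rw [hp0] at hpl
          have := congrArg Prod.fst hpl
          simp at this
          omega
        · have hll : l - 1 ≤ a - 1 := by omega
          have := hrowA (l - 1) hll
          have hleq : 1 + (l - 1) = l := by omega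
          rw [hleq] at this
          omega
      have h0 : Pos T (1 + i) = ((Pos T (1 + i)).1, (Pos T (1 + i)).2) := rfl
      rw [h0, hrow, hc0]
    -- run B : values a+1 .. 2a-1 occupy rows 1 .. a-1
    have hdB : ∀ k, a + 1 < k → k ≤ 2 * a - 1 → k ∉ NDS T := by
      intro k h1 h2
      exact hnotnd k (by omega) h2 (by omega) (by omega)
    have hrB1 : (Pos T (a + 1)).1 = 1 := by
      have h2 := run_le T (u := a + 1) (v := 2 * a - 1) (by omega) (by omega) hdB
      have h3 := hrowbd (2 * a - 1) (by omega)
      have hle1 : (Pos T (a + 1)).1 ≤ 1 := by omega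
      have hne0 : (Pos T (a + 1)).1 ≠ 0 := by
        intro h0
        have hclt : (Pos T (a + 1)).2 < 2 := hsmallcol (a + 1) (by omega)
        by_cases hcc : (Pos T (a + 1)).2 = 0
        · have heq : Pos T (a + 1) = (0, 0) := by
            have hh : Pos T (a + 1) = ((Pos T (a + 1)).1, (Pos T (a + 1)).2) := rfl
            rw [hh, h0, hcc]
          have := pos_inj T (show a + 1 < a * b by omega) (show 0 < a * b by omega)
            (by rw [heq, hp0])
          omega
        · have hcc1 : (Pos T (a + 1)).2 = 1 := by omega
          have heq : Pos T (a + 1) = (0, 1) := by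
            have hh : Pos T (a + 1) = ((Pos T (a + 1)).1, (Pos T (a + 1)).2) := rfl
            rw [hh, h0, hcc1]
          have := pos_inj T (show a + 1 < a * b by omega) (show 1 < a * b by omega)
            (by rw [heq, hpos1])
          omega
      omega
    have hrowB : ∀ i, 1 ≤ i → i < a → (Pos T (a + i)).1 = i := by
      intro i hi1 hi2
      have h1 := run_le T (u := a + 1) (v := a + i) (by omega) (by omega)
        (fun k hk1 hk2 => hdB k hk1 (by omega))
      have h2 := run_le T (u := a + i) (v := 2 * a - 1) (by omega) (by omega)
        (fun k hk1 hk2 => hdB k (by omega) hk2)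
      have h3 := hrowbd (2 * a - 1) (by omega)
      omega
    have hposB : ∀ i, 1 ≤ i → i < a → Pos T (a + i) = (i, 1) := by
      intro i hi1 hi2
      have hrow := hrowB i hi1 hi2
      have hcolB : (Pos T (a + i)).2 < 2 := hsmallcol (a + i) (by omega)
      have hc1 : (Pos T (a + i)).2 = 1 := by
        by_contra hc
        have hc0 : (Pos T (a + i)).2 = 0 := by omega
        have heq : Pos T (a + i) = (i, 0) := by
          have hh : Pos T (a + i) = ((Pos T (a + i)).1, (Pos T (a + i)).2) := rfl
          rw [hh, hrow, hc0]
        have := pos_inj T (show a + i < a * b by omega) (show 1 + i < a * b by omega)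
          (by rw [heq, hposA i hi1 hi2])
        omega
      have hh : Pos T (a + i) = ((Pos T (a + i)).1, (Pos T (a + i)).2) := rfl
      rw [hh, hrow, hc1]
    exact ⟨hp0, hpos1, hposA, hposB⟩

/-- explicit positions of the extremal tableau -/
def posW (a k : ℕ) : ℕ × ℕ :=
  if k = 0 then (0, 0) else if k = 1 then (0, 1) else if k ≤ a then (k - 1, 0)
  else (k % a, k / a)

/-- explicit values of the extremal tableau -/
def Vt (a : ℕ) (c : ℕ × ℕ) : ℕ :=
  if c.2 = 0 then (if c.1 = 0 then 0 else c.1 + 1)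
  else if c.1 = 0 ∧ c.2 = 1 then 1 else c.2 * a + c.1

lemma Vt_00 : Vt a (0, 0) = 0 := by simp [Vt]

lemma Vt_i0 {i : ℕ} (h : i ≠ 0) : Vt a (i, 0) = i + 1 := by simp [Vt, h]

lemma Vt_01 : Vt a (0, 1) = 1 := by simp [Vt]

lemma Vt_gen {i j : ℕ} (hj : j ≠ 0) (h : ¬(i = 0 ∧ j = 1)) : Vt a (i, j) = j * a + i := by
  simp only [Vt]
  rw [if_neg hj, if_neg h]

lemma posW_zero : posW a 0 = (0, 0) := rfl

lemma posW_one : posW a 1 = (0, 1) := by simp [posW]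

lemma posW_small {k : ℕ} (h2 : 2 ≤ k) (hk : k ≤ a) : posW a k = (k - 1, 0) := by
  have g1 : ¬ k = 0 := by omega
  have g2 : ¬ k = 1 := by omega
  unfold posW
  rw [if_neg g1, if_neg g2, if_pos hk]

lemma posW_big (ha1 : 1 ≤ a) {k : ℕ} (hk : a < k) : posW a k = (k % a, k / a) := by
  have h1 : ¬ k = 0 := by omega
  have h2 : ¬ k = 1 := by omega
  have h3 : ¬ k ≤ a := by omega
  unfold posW
  rw [if_neg h1, if_neg h2, if_neg h3]

lemma posW_mem (ha : 2 ≤ a) (hb : 2 ≤ b) {k : ℕ} (hk : k < a * b) : posW a k ∈ grid a b := by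
  have ha0 : 0 < a := by omega
  rcases (show k = 0 ∨ k = 1 ∨ (2 ≤ k ∧ k ≤ a) ∨ a < k by omega) with h | h | h | h
  · subst h; rw [posW_zero]; exact mem_grid.2 ⟨by omega, by omega⟩
  · subst h; rw [posW_one]; exact mem_grid.2 ⟨by omega, by omega⟩
  · rw [posW_small h.1 h.2]; exact mem_grid.2 ⟨by omega, by omega⟩
  · rw [posW_big (by omega) h]
    refine mem_grid.2 ⟨Nat.mod_lt _ ha0, ?_⟩
    rw [Nat.div_lt_iff_lt_mul ha0]
    calc k < a * b := hk
      _ = b * a := Nat.mul_comm a b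

lemma Vt_posW (ha : 2 ≤ a) {k : ℕ} (hk : k < a * b) : Vt a (posW a k) = k := by
  have ha0 : 0 < a := by omega
  rcases (show k = 0 ∨ k = 1 ∨ (2 ≤ k ∧ k ≤ a) ∨ a < k by omega) with h | h | h | h
  · subst h; rfl
  · subst h; rw [posW_one]; rfl
  · rw [posW_small h.1 h.2, Vt_i0 (by omega)]
    omega
  · rw [posW_big (by omega) h]
    have hq1 : 1 ≤ k / a := by
      rw [Nat.le_div_iff_mul_le ha0]; omega
    have hne : ¬ (k % a = 0 ∧ k / a = 1) := by
      rintro ⟨h1, h2⟩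
      have := Nat.div_add_mod k a
      rw [h1, h2] at this
      omega
    rw [Vt_gen (by omega) hne]
    have := Nat.div_add_mod k a
    have hcm : a * (k / a) = k / a * a := Nat.mul_comm _ _
    omega

lemma posW_Vt (ha : 2 ≤ a) {c : ℕ × ℕ} (hc : c ∈ grid a b) : posW a (Vt a c) = c := by
  have ha0 : 0 < a := by omega
  obtain ⟨i, j⟩ := c
  obtain ⟨hi, hj⟩ := mem_grid.1 hc
  simp only at hi hj
  rcases Nat.eq_zero_or_pos j with rfl | hj1
  · rcases Nat.eq_zero_or_pos i with rfl | hi1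
    · rfl
    · have hV : Vt a (i, 0) = i + 1 := Vt_i0 (by omega)
      rw [hV, posW_small (by omega) (by omega)]
      simp
  · by_cases h01 : i = 0 ∧ j = 1
    · obtain ⟨rfl, rfl⟩ := h01
      rw [Vt_01, posW_one]
    · have hV : Vt a (i, j) = j * a + i := Vt_gen (by omega) h01
      have hja : a ≤ j * a := by
        calc a = 1 * a := (one_mul a).symm
          _ ≤ j * a := Nat.mul_le_mul_right a hj1
      have hgt : a < j * a + i := by
        rcases Nat.eq_or_lt_of_le hj1 with h1 | h1
        · have hi1 : 1 ≤ i := by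
            by_contra h2
            exact h01 ⟨by omega, h1.symm⟩
          omega
        · have : 2 * a ≤ j * a := Nat.mul_le_mul_right a (by omega)
          omega
      rw [hV, posW_big (by omega) hgt]
      have hmod : (j * a + i) % a = i := by
        rw [Nat.mul_comm j a, Nat.mul_add_mod]
        exact Nat.mod_eq_of_lt hi
      have hdiv : (j * a + i) / a = j := by
        rw [Nat.mul_comm j a, Nat.mul_add_div ha0, Nat.div_eq_of_lt hi]
        omega
      rw [hmod, hdiv]


lemma Vt_lt (ha : 2 ≤ a) (hb : 2 ≤ b) {c : ℕ × ℕ} (hc : c ∈ grid a b) : Vt a c < a * b := by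
  have ha0 : 0 < a := by omega
  obtain ⟨i, j⟩ := c
  obtain ⟨hi, hj⟩ := mem_grid.1 hc
  simp only at hi hj
  have h2ab : 2 * a ≤ a * b := by
    calc 2 * a ≤ b * a := Nat.mul_le_mul_right a hb
      _ = a * b := Nat.mul_comm b a
  unfold Vt
  simp only []
  split_ifs with h1 h2 h3
  · omega
  · omega
  · omega
  · have : j * a + i < (j + 1) * a := by
      have : (j + 1) * a = j * a + a := by ring
      omega
    have h4 : (j + 1) * a ≤ b * a := Nat.mul_le_mul_right a (by omega)
    have h5 : b * a = a * b := Nat.mul_comm b a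
    omega

lemma Vt_row_mono (ha : 2 ≤ a) {c c' : ℕ × ℕ} (hc : c ∈ grid a b) (hc' : c' ∈ grid a b)
    (h1 : c.1 = c'.1) (h2 : c.2 < c'.2) : Vt a c < Vt a c' := by
  obtain ⟨i, j⟩ := c
  obtain ⟨i', j'⟩ := c'
  obtain ⟨hi, hj⟩ := mem_grid.1 hc
  obtain ⟨hi', hj'⟩ := mem_grid.1 hc'
  simp only at h1 h2 hi hj hi' hj' ⊢
  subst h1
  have hja : a ≤ j' * a := by
    calc a = 1 * a := (one_mul a).symm
      _ ≤ j' * a := Nat.mul_le_mul_right a (by omega)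
  unfold Vt
  simp only []
  split_ifs <;>
    first
      | omega
      | (have h2a : 2 * a ≤ j' * a := Nat.mul_le_mul_right a (by omega); omega)
      | (have hlt : j * a < j' * a := (Nat.mul_lt_mul_right (show 0 < a by omega)).2 h2; omega)

lemma Vt_col_mono (ha : 2 ≤ a) {c c' : ℕ × ℕ} (hc : c ∈ grid a b) (hc' : c' ∈ grid a b)
    (h1 : c.2 = c'.2) (h2 : c.1 < c'.1) : Vt a c < Vt a c' := by
  obtain ⟨i, j⟩ := c
  obtain ⟨i', j'⟩ := c'
  obtain ⟨hi, hj⟩ := mem_grid.1 hc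
  obtain ⟨hi', hj'⟩ := mem_grid.1 hc'
  simp only at h1 h2 hi hj hi' hj' ⊢
  subst h1
  unfold Vt
  simp only []
  split_ifs <;>
    first
      | omega
      | (have hja : 1 * a ≤ j * a := Nat.mul_le_mul_right a (by omega); omega)

def T0 (ha : 2 ≤ a) (hb : 2 ≤ b) : SYTOf (grid a b) where
  toEquiv :=
    { toFun := fun c => ⟨Vt a c.1, by rw [grid_card]; exact Vt_lt ha hb c.2⟩
      invFun := fun k => ⟨posW a k.1, posW_mem ha hb (by rw [← grid_card a b]; exact k.isLt)⟩
      left_inv := fun c => Subtype.ext (posW_Vt ha c.2)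
      right_inv := fun k => Fin.ext (Vt_posW ha (by rw [← grid_card a b]; exact k.isLt)) }
  row_lt := fun c c' h1 h2 => by
    have := Vt_row_mono (b := b) ha c.2 c'.2 h1 h2
    simpa [Fin.mk_lt_mk] using this
  col_lt := fun c c' h1 h2 => by
    have := Vt_col_mono (b := b) ha c.2 c'.2 h1 h2
    simpa [Fin.mk_lt_mk] using this

lemma pos_T0 (ha : 2 ≤ a) (hb : 2 ≤ b) {k : ℕ} (hk : k < a * b) :
    Pos (T0 ha hb) k = posW a k := by
  have hc : k < (grid a b).card := by rwa [grid_card]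
  rw [pos_def _ hc]
  rfl

lemma NDS_T0 (ha : 2 ≤ a) (hb : 2 ≤ b) :
    NDS (T0 ha hb) = insert 1 (insert (a + 1) ((Finset.Ico 2 b).image (fun j => j * a))) := by
  have ha0 : 0 < a := by omega
  have h4ab : 2 * 2 ≤ a * b := Nat.mul_le_mul ha hb
  have h2ab : 2 * a ≤ a * b := by
    calc 2 * a ≤ b * a := Nat.mul_le_mul_right a hb
      _ = a * b := Nat.mul_comm b a
  ext k
  rw [mem_NDS]
  simp only [Finset.mem_insert, Finset.mem_image, Finset.mem_Ico]
  constructor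
  · rintro ⟨h1, hab, hnd⟩
    rw [pos_T0 ha hb hab, pos_T0 ha hb (show k - 1 < a * b by omega)] at hnd
    rcases (show k = 1 ∨ (2 ≤ k ∧ k ≤ a) ∨ k = a + 1 ∨ a + 2 ≤ k by omega) with h | h | h | h
    · exact Or.inl h
    · exfalso
      apply hnd
      rcases (show k = 2 ∨ 3 ≤ k by omega) with h2 | h2
      · subst h2
        rw [posW_small (le_refl 2) h.2, show (2:ℕ) - 1 = 1 from rfl, posW_one]
        simp
      · rw [posW_small (by omega) h.2, posW_small (show 2 ≤ k - 1 by omega) (by omega)]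
        simp
        omega
    · exact Or.inr (Or.inl h)
    · set r := k % a with hr_def
      set q := k / a with hq_def
      have hqr : a * q + r = k := Nat.div_add_mod k a
      have hr : r < a := Nat.mod_lt _ ha0
      by_cases hr0 : r = 0
      · right; right
        refine ⟨q, ⟨?_, ?_⟩, by rw [Nat.mul_comm q a]; omega⟩
        · by_contra hq2
          have : a * q ≤ a * 1 := Nat.mul_le_mul_left a (by omega)
          omega
        · have : a * q < a * b := by omega
          exact Nat.lt_of_mul_lt_mul_left this
      · exfalso
        apply hnd
        rw [posW_big (by omega) (show a < k - 1 by omega), posW_big (by omega) (show a < k by omega)]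
        have hk1 : k - 1 = a * q + (r - 1) := by omega
        have h1 : (k - 1) % a = r - 1 := by
          rw [hk1, Nat.mul_add_mod]
          exact Nat.mod_eq_of_lt (by omega)
        show (k - 1) % a < k % a
        omega
  · intro h
    have hab : k < a * b := by
      rcases h with rfl | rfl | ⟨j, ⟨hj2, hjb⟩, rfl⟩
      · omega
      · omega
      · calc j * a < b * a := (Nat.mul_lt_mul_right ha0).2 hjb
          _ = a * b := Nat.mul_comm b a
    refine ⟨?_, hab, ?_⟩
    · rcases h with rfl | rfl | ⟨j, ⟨hj2, hjb⟩, rfl⟩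
      · omega
      · omega
      · have : 2 * a ≤ j * a := Nat.mul_le_mul_right a hj2
        omega
    · rw [pos_T0 ha hb hab, pos_T0 ha hb (show k - 1 < a * b by omega)]
      rcases h with rfl | rfl | ⟨j, ⟨hj2, hjb⟩, rfl⟩
      · rw [show (1:ℕ) - 1 = 0 from rfl, posW_zero, posW_one]
        simp
      · have hmod : (a + 1) % a = 1 := by
          rw [show a + 1 = a * 1 + 1 by ring, Nat.mul_add_mod]
          exact Nat.mod_eq_of_lt (by omega)
        have hrow1 : (posW a (a + 1)).1 = 1 := by
          rw [posW_big (by omega) (by omega)]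
          simp [hmod]
        have hrow0 : (posW a (a + 1 - 1)).1 = a - 1 := by
          rw [show a + 1 - 1 = a from rfl, posW_small ha (le_refl a)]
        rw [hrow0, hrow1]
        omega
      · have h2a : 2 * a ≤ j * a := Nat.mul_le_mul_right a hj2
        have hrow : (posW a (j * a)).1 = 0 := by
          rw [posW_big (by omega) (by omega)]
          simp [Nat.mul_mod_left]
        rw [hrow]
        omega

lemma comaj_T0 (ha : 2 ≤ a) (hb : 2 ≤ b) :
    comaj (T0 ha hb) = (∑ j ∈ Finset.range b, j * a) + 2 := by
  have ha0 : 0 < a := by omega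
  rw [comaj_eq_sum_NDS, NDS_T0]
  have h2a : ∀ j, 2 ≤ j → 2 * a ≤ j * a := fun j hj => Nat.mul_le_mul_right a hj
  have h1n : (1 : ℕ) ∉ insert (a + 1) ((Finset.Ico 2 b).image (fun j => j * a)) := by
    simp only [Finset.mem_insert, Finset.mem_image, Finset.mem_Ico]
    rintro (h | ⟨j, ⟨hj2, hjb⟩, hje⟩)
    · omega
    · have := h2a j hj2; omega
  have h2n : a + 1 ∉ (Finset.Ico 2 b).image (fun j => j * a) := by
    simp only [Finset.mem_image, Finset.mem_Ico]
    rintro ⟨j, ⟨hj2, hjb⟩, hje⟩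
    have := h2a j hj2; omega
  rw [Finset.sum_insert h1n, Finset.sum_insert h2n,
    Finset.sum_image (fun x _ y _ h => Nat.eq_of_mul_eq_mul_right ha0 h)]
  have hsplit : ∑ j ∈ Finset.Ico 0 2, j * a + ∑ j ∈ Finset.Ico 2 b, j * a
      = ∑ j ∈ Finset.Ico 0 b, j * a :=
    Finset.sum_Ico_consecutive _ (by omega) (by omega)
  have h02 : ∑ j ∈ Finset.range 2, j * a = a := by
    rw [Finset.sum_range_succ, Finset.sum_range_succ]
    simp
  rw [← Finset.range_eq_Ico, ← Finset.range_eq_Ico] at hsplit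
  omega

lemma pos_unique (ha : 2 ≤ a) (hb : 2 ≤ b)
    (hcomaj : comaj T = (∑ j ∈ Finset.range b, j * a) + 2) :
    ∀ k, k < a * b → Pos T k = posW a k := by
  have ha0 : 0 < a := by omega
  obtain ⟨hQ2', hsum2⟩ := cols_down T ha hb hcomaj (b - 2) le_rfl
  have hb2 : b - (b - 2) = 2 := by omega
  rw [hb2] at hQ2' hsum2
  obtain ⟨hp0, hp1, hA, hB⟩ := base_two T ha hb hQ2' hsum2
  intro k hk
  rcases (show k = 0 ∨ k = 1 ∨ (2 ≤ k ∧ k ≤ a) ∨ (a + 1 ≤ k ∧ k ≤ 2 * a - 1) ∨ 2 * a ≤ k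
    by omega) with h | h | h | h | h
  · subst h; rw [hp0, posW_zero]
  · subst h; rw [hp1, posW_one]
  · have := hA (k - 1) (by omega) (by omega)
    rw [show 1 + (k - 1) = k by omega] at this
    rw [this, posW_small h.1 h.2]
  · obtain ⟨m, hm1, hm2, rfl⟩ : ∃ m, 1 ≤ m ∧ m < a ∧ k = a + m :=
      ⟨k - a, by omega, by omega, by omega⟩
    have := hB m hm1 hm2
    rw [this, posW_big (k := a + m) ha0 (by omega)]
    have hmod : (a + m) % a = m := by
      rw [show a + m = a * 1 + m by ring, Nat.mul_add_mod]
      exact Nat.mod_eq_of_lt hm2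
    have hdiv : (a + m) / a = 1 := by
      rw [show a + m = a * 1 + m by ring, Nat.mul_add_div ha0, Nat.div_eq_of_lt hm2]
    rw [hmod, hdiv]
  · set r := k % a with hr_def
    set q := k / a with hq_def
    have hqr : a * q + r = k := Nat.div_add_mod k a
    have hr : r < a := Nat.mod_lt _ ha0
    have hq2 : 2 ≤ q := by
      by_contra hq
      have : a * q ≤ a * 1 := Nat.mul_le_mul_left a (by omega)
      omega
    have hqb : q < b := by
      have : a * q < a * b := by omega
      exact Nat.lt_of_mul_lt_mul_left this
    have := hQ2' q r hq2 hqb hr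
    rw [show q * a + r = k by rw [Nat.mul_comm q a]; omega] at this
    rw [this, posW_big (k := k) ha0 (by omega)]

lemma ext_of_pos (T T' : SYTOf (grid a b)) (h : ∀ k, k < a * b → Pos T k = Pos T' k) :
    T = T' := by
  have hsym : T.toEquiv.symm = T'.toEquiv.symm := by
    apply Equiv.ext
    intro K
    apply Subtype.ext
    have hK : (K : ℕ) < a * b := by rw [← grid_card a b]; exact K.isLt
    have := h K hK
    rw [pos_def T K.isLt, pos_def T' K.isLt] at this
    simpa using this
  have heq : T.toEquiv = T'.toEquiv := by
    have := congrArg Equiv.symm hsym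
    simpa using this
  cases T; cases T'; simpa using heq

theorem main_core (ha : 2 ≤ a) (hb : 2 ≤ b) :
    ∃! T : SYTOf (grid a b), comaj T = (∑ j ∈ Finset.range b, j * a) + 2 := by
  refine ⟨T0 ha hb, comaj_T0 ha hb, ?_⟩
  intro T hT
  apply ext_of_pos
  intro k hk
  rw [pos_unique T ha hb hT k hk, pos_T0 ha hb hk]

end RectAux

/-- If `λ ⊢ n` is a rectangle with at least two rows and at least two
columns, then there is exactly one standard Young tableau of shape `λ` with major index
`C(n,2) − b(λ') − 2`. -/
theorem unique_syt_submaximal_maj (μ : YoungDiagram) (n : ℕ) (hμn : μ.card = n)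
    (hrect : ∃ a b : ℕ, 2 ≤ a ∧ 2 ≤ b ∧ μ.cells = Finset.range a ×ˢ Finset.range b) :
    ∃! T : SYTOf μ.cells,
      (T.maj : ℤ) = (n.choose 2 : ℤ) - (bstat μ.transpose : ℤ) - 2 := by
  classical
  obtain ⟨a, b, ha, hb, hcells⟩ := hrect
  have hn : n = a * b := by
    rw [← hμn]
    show μ.cells.card = a * b
    rw [hcells]
    simp
  have hbstat : bstat μ.transpose = ∑ j ∈ Finset.range b, j * a := by
    unfold bstat
    have hcells' : μ.transpose.cells = Finset.range b ×ˢ Finset.range a := by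
      ext c
      rw [YoungDiagram.mem_cells, YoungDiagram.mem_transpose, ← YoungDiagram.mem_cells, hcells]
      simp only [Finset.mem_product, Finset.mem_range, Prod.fst_swap, Prod.snd_swap]
      tauto
    rw [hcells', Finset.sum_product]
    refine Finset.sum_congr rfl fun x _ => ?_
    rw [Finset.sum_const, Finset.card_range, smul_eq_mul, Nat.mul_comm]
  rw [hcells]
  have key : ∀ T : SYTOf (Finset.range a ×ˢ Finset.range b),
      ((T.maj : ℤ) = (n.choose 2 : ℤ) - (bstat μ.transpose : ℤ) - 2) ↔
      RectAux.comaj (a := a) (b := b) T = (∑ j ∈ Finset.range b, j * a) + 2 := by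
    intro T
    have hmc : T.maj + RectAux.comaj (a := a) (b := b) T = (a * b).choose 2 :=
      RectAux.maj_add_comaj (a := a) (b := b) T
    rw [hn, hbstat]
    constructor
    · intro h
      generalize (∑ j ∈ Finset.range b, j * a) = S at h ⊢
      omega
    · intro h
      generalize (∑ j ∈ Finset.range b, j * a) = S at h ⊢
      omega
  obtain ⟨T0, hT0, huniq⟩ := RectAux.main_core (a := a) (b := b) ha hb
  refine ⟨T0, (key T0).mpr hT0, fun T hT => huniq T ((key T).mp hT)⟩
end

section
/- Let λ/ν be a skew shape with n cells such that max_{c∈λ/ν} h_c < 0.8·n, and let d be any positive integer. Then n^{d+1}/(26(d+1)) − 2·(0.8)^d·n^d < Σ_{j=1}^n j^d − Σ_{c∈λ/ν} h_c^d < n^{d+1}/(d+1) + n^d. -/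
open Finset MeasureTheory Filter ProbabilityTheory

section HookAux

lemma hookL1 (d b : ℕ) : (b+1)^(d+1) ≤ b^(d+1) + (d+1)*(b+1)^d := by
  induction d with
  | zero => simp
  | succ d ih =>
    calc (b+1)^(d+2) = (b+1) * (b+1)^(d+1) := by ring
    _ ≤ (b+1) * (b^(d+1) + (d+1)*(b+1)^d) := Nat.mul_le_mul_left _ ih
    _ = b*b^(d+1) + b^(d+1) + (d+1)*((b+1)^(d+1)) := by ring
    _ ≤ b^(d+2) + (b+1)^(d+1) + (d+1)*(b+1)^(d+1) := by
        have h1 : b*b^(d+1) = b^(d+2) := by ring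
        have h2 : b^(d+1) ≤ (b+1)^(d+1) := Nat.pow_le_pow_left (by omega) _
        omega
    _ = b^(d+2) + (d+2)*(b+1)^(d+1) := by ring

lemma hookL2 (d b : ℕ) : b^(d+1) + (d+1)*b^d ≤ (b+1)^(d+1) := by
  induction d with
  | zero => simp
  | succ d ih =>
    calc (b+1)^(d+2) = (b+1) * (b+1)^(d+1) := by ring
    _ ≥ (b+1) * (b^(d+1) + (d+1)*b^d) := Nat.mul_le_mul_left _ ih
    _ = b^(d+2) + (d+2)*b^(d+1) + (d+1)*b^d := by ring
    _ ≥ b^(d+2) + (d+2)*b^(d+1) := Nat.le_add_right _ _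

lemma hookS_lower (d a : ℕ) : ∀ b, a ≤ b →
    b^(d+1) ≤ a^(d+1) + (d+1) * ∑ j ∈ Icc (a+1) b, j^d := by
  intro b
  induction b with
  | zero => intro h; interval_cases a; simp
  | succ b ih =>
    intro hab
    rcases Nat.lt_or_ge a (b+1) with h | h
    · have hab' : a ≤ b := by omega
      have := ih hab'
      rw [Finset.sum_Icc_succ_top (by omega : a+1 ≤ b+1)]
      calc (b+1)^(d+1) ≤ b^(d+1) + (d+1)*(b+1)^d := hookL1 d b
      _ ≤ a^(d+1) + (d+1) * ∑ j ∈ Icc (a+1) b, j^d + (d+1)*(b+1)^d := by omega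
      _ = a^(d+1) + (d+1) * (∑ j ∈ Icc (a+1) b, j^d + (b+1)^d) := by ring
    · have : a = b+1 := by omega
      subst this
      simp

lemma hookS_upper (d n : ℕ) (hd : 1 ≤ d) :
    (d+1) * ∑ j ∈ Icc 1 n, j^d ≤ n^(d+1) + (d+1)*n^d := by
  induction n with
  | zero =>
    have : (0:ℕ)^d = 0 := Nat.zero_pow (by omega)
    simp [this]
  | succ n ih =>
    rw [Finset.sum_Icc_succ_top (by omega : 1 ≤ n+1)]
    have h2 := hookL2 d n
    calc (d+1) * (∑ j ∈ Icc 1 n, j^d + (n+1)^d)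
        = (d+1) * ∑ j ∈ Icc 1 n, j^d + (d+1)*(n+1)^d := by ring
    _ ≤ n^(d+1) + (d+1)*n^d + (d+1)*(n+1)^d := by omega
    _ ≤ (n+1)^(d+1) + (d+1)*(n+1)^d := by omega

lemma hookNum1 (d : ℕ) (hd : 1 ≤ d) : (0.8:ℝ)^d * (0.2*d+1) ≤ 25/26 := by
  induction d with
  | zero => omega
  | succ d ih =>
    rcases Nat.eq_zero_or_pos d with h | h
    · subst h; norm_num
    · have ih' := ih h
      have hp : (0:ℝ) ≤ (0.8:ℝ)^d := by positivity
      have : (0.8:ℝ)^(d+1) * (0.2*(d+1:ℕ)+1) ≤ (0.8:ℝ)^d * (0.2*d+1) := by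
        push_cast
        rw [pow_succ]
        nlinarith [hp]
      linarith

lemma hookAna (d : ℕ) (hd : 1 ≤ d) (X N : ℝ) (h0 : 0 ≤ X) (h1 : X ≤ 0.8*N) :
    X^d * (((d:ℝ)+1)*N - (d:ℝ)*X) ≤ 25/26 * N^(d+1) := by
  have hN0 : 0 ≤ N := by nlinarith
  set Z : ℝ := 0.8*N with hZdef
  have hZ0 : 0 ≤ Z := by positivity
  have hXZ : X ≤ Z := h1
  have hZN : Z ≤ N := by rw [hZdef]; nlinarith
  have hXN : X ≤ N := le_trans hXZ hZN
  set S : ℝ := ∑ i ∈ range d, Z^i * X^(d-1-i) with hSdef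
  have hgeom : Z^d - X^d = (Z - X) * S := by
    have h := geom_sum₂_mul Z X d
    rw [hSdef]; linarith [h]
  have hS0 : 0 ≤ S := Finset.sum_nonneg fun i _ => mul_nonneg (pow_nonneg hZ0 _) (pow_nonneg h0 _)
  have hSd : (d:ℝ) * X^(d-1) ≤ S := by
    have : (d:ℝ) * X^(d-1) = ∑ _i ∈ range d, X^(d-1) := by
      rw [Finset.sum_const, Finset.card_range, nsmul_eq_mul]
    rw [this, hSdef]
    refine Finset.sum_le_sum fun i hi => ?_
    have hi' : i < d := Finset.mem_range.mp hi
    have he : X^(d-1) = X^i * X^(d-1-i) := by rw [← pow_add]; congr 1; omega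
    rw [he]
    exact mul_le_mul_of_nonneg_right (pow_le_pow_left₀ h0 hXZ i) (pow_nonneg h0 _)
  have hXd : X * X^(d-1) = X^d := by
    rw [← pow_succ']; congr 1; omega
  have hbr : (d:ℝ)*X^d ≤ (((d:ℝ)+1)*N - (d:ℝ)*Z) * S := by
    have he : ((d:ℝ)+1)*N - (d:ℝ)*Z = (0.2*d+1)*N := by rw [hZdef]; ring
    rw [he]
    have h1' : (d:ℝ)*X^d = X * ((d:ℝ) * X^(d-1)) := by rw [← hXd]; ring
    have h2' : X * ((d:ℝ)*X^(d-1)) ≤ N * ((d:ℝ)*X^(d-1)) :=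
      mul_le_mul_of_nonneg_right hXN (by positivity)
    have h3' : N * ((d:ℝ)*X^(d-1)) ≤ N * S := mul_le_mul_of_nonneg_left hSd hN0
    have h4' : N * S ≤ (0.2*d+1)*N*S := by nlinarith [mul_nonneg hN0 hS0]
    linarith [h1' ▸ h2']
  have hdiff : Z^d*(((d:ℝ)+1)*N - (d:ℝ)*Z) - X^d*(((d:ℝ)+1)*N - (d:ℝ)*X)
      = (Z - X) * ((((d:ℝ)+1)*N - (d:ℝ)*Z)*S - (d:ℝ)*X^d) := by
    have e2 : Z^(d+1) - X^(d+1) = Z*(Z^d - X^d) + (Z - X)*X^d := by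
      rw [pow_succ, pow_succ]; ring
    have e1 : Z^d*(((d:ℝ)+1)*N - (d:ℝ)*Z) - X^d*(((d:ℝ)+1)*N - (d:ℝ)*X)
        = ((d:ℝ)+1)*N*(Z^d - X^d) - (d:ℝ)*(Z^(d+1) - X^(d+1)) := by
      rw [pow_succ, pow_succ]; ring
    rw [e1, e2, hgeom]; ring
  have step1 : X^d*(((d:ℝ)+1)*N - (d:ℝ)*X) ≤ Z^d*(((d:ℝ)+1)*N - (d:ℝ)*Z) := by
    nlinarith [mul_nonneg (sub_nonneg.mpr hXZ) (sub_nonneg.mpr hbr)]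
  have step2 : Z^d*(((d:ℝ)+1)*N - (d:ℝ)*Z) = (0.8:ℝ)^d * (0.2*d+1) * N^(d+1) := by
    rw [hZdef, mul_pow, pow_succ]; ring
  have step3 : (0.8:ℝ)^d * (0.2*d+1) * N^(d+1) ≤ 25/26 * N^(d+1) :=
    mul_le_mul_of_nonneg_right (hookNum1 d hd) (by positivity)
  linarith [step1, step2 ▸ (le_refl (Z^d*(((d:ℝ)+1)*N - (d:ℝ)*Z)))]

end HookAux

namespace HookKeyAux

variable (s : Finset (ℕ × ℕ))

def B : ℕ := (s.sup fun c => c.2) + 1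

def kf (c : ℕ × ℕ) : ℕ := c.1 * B s + c.2

def rk (c : ℕ × ℕ) : ℕ := (s.filter fun c' => kf s c ≤ kf s c').card

lemma col_lt_B {c : ℕ × ℕ} (hc : c ∈ s) : c.2 < B s :=
  Nat.lt_succ_of_le (Finset.le_sup (f := fun c => c.2) hc)

lemma kf_lt_of_row_lt {c c' : ℕ × ℕ} (hc : c ∈ s) (h : c.1 < c'.1) :
    kf s c < kf s c' := by
  have h1 : c.2 < B s := col_lt_B s hc
  have : kf s c < (c.1 + 1) * B s := by unfold kf; nlinarith
  have h2 : (c.1 + 1) * B s ≤ c'.1 * B s := Nat.mul_le_mul_right _ (by omega)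
  unfold kf; unfold kf at this; omega

lemma kf_inj {c c' : ℕ × ℕ} (hc : c ∈ s) (hc' : c' ∈ s) (h : c ≠ c') :
    kf s c ≠ kf s c' := by
  rcases lt_trichotomy c.1 c'.1 with h1 | h1 | h1
  · exact Nat.ne_of_lt (kf_lt_of_row_lt s hc h1)
  · intro he
    unfold kf at he
    rw [h1] at he
    have : c.2 = c'.2 := by omega
    exact h (Prod.ext h1 this)
  · exact (Nat.ne_of_lt (kf_lt_of_row_lt s hc' h1)).symm

lemma hook_le_rk {c : ℕ × ℕ} (hc : c ∈ s) : skewHook s c ≤ rk s c := by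
  apply Finset.card_le_card
  intro c' h
  rw [Finset.mem_filter] at h ⊢
  refine ⟨h.1, ?_⟩
  rcases h.2 with ⟨hr, hcol⟩ | ⟨hcol, hr⟩
  · unfold kf; rw [hr]; omega
  · exact le_of_lt (by
      have := kf_lt_of_row_lt s hc hr
      unfold kf at this ⊢; omega)

lemma rk_anti {c c' : ℕ × ℕ} (hc : c ∈ s) (hc' : c' ∈ s) (h : kf s c < kf s c') :
    rk s c' < rk s c := by
  apply Finset.card_lt_card
  rw [Finset.ssubset_iff_of_subset]
  · exact ⟨c, Finset.mem_filter.mpr ⟨hc, le_refl _⟩,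
      fun hmem => absurd ((Finset.mem_filter.mp hmem).2) (by omega)⟩
  · intro x hx
    rw [Finset.mem_filter] at hx ⊢
    exact ⟨hx.1, le_trans (le_of_lt h) hx.2⟩

lemma rk_injOn : Set.InjOn (rk s) s := by
  intro c hc c' hc' he
  by_contra hne
  rcases lt_trichotomy (kf s c) (kf s c') with h | h | h
  · exact absurd he (by have := rk_anti s hc hc' h; omega)
  · exact kf_inj s hc hc' hne h
  · exact absurd he (by have := rk_anti s hc' hc h; omega)

lemma rk_mem {c : ℕ × ℕ} (hc : c ∈ s) : rk s c ∈ Icc 1 s.card := by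
  rw [Finset.mem_Icc]
  constructor
  · exact Finset.card_pos.mpr ⟨c, Finset.mem_filter.mpr ⟨hc, le_refl _⟩⟩
  · exact Finset.card_le_card (Finset.filter_subset _ _)

end HookKeyAux

lemma skewHook_pos {s : Finset (ℕ × ℕ)} {c : ℕ × ℕ} (hc : c ∈ s) : 1 ≤ skewHook s c :=
  Finset.card_pos.mpr ⟨c, Finset.mem_filter.mpr ⟨hc, Or.inl ⟨rfl, le_refl _⟩⟩⟩

lemma hook_key_sum (s : Finset (ℕ × ℕ)) (d : ℕ) :
    ∑ c ∈ s, (skewHook s c)^d ≤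
      ∑ j ∈ Icc 1 s.card, (min (s.sup fun c => skewHook s c) j)^d := by
  calc ∑ c ∈ s, (skewHook s c)^d
      ≤ ∑ c ∈ s, (min (s.sup fun c => skewHook s c) (HookKeyAux.rk s c))^d := by
        refine Finset.sum_le_sum fun c hc => Nat.pow_le_pow_left ?_ d
        exact le_min (Finset.le_sup (f := fun c => skewHook s c) hc) (HookKeyAux.hook_le_rk s hc)
  _ = ∑ j ∈ s.image (HookKeyAux.rk s), (min (s.sup fun c => skewHook s c) j)^d := by
        have hinj : ∀ c ∈ s, ∀ c' ∈ s, HookKeyAux.rk s c = HookKeyAux.rk s c' → c = c' :=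
          fun c hc c' hc' h =>
            HookKeyAux.rk_injOn s (Finset.mem_coe.mpr hc) (Finset.mem_coe.mpr hc') h
        rw [Finset.sum_image hinj]
  _ ≤ ∑ j ∈ Icc 1 s.card, (min (s.sup fun c => skewHook s c) j)^d := by
        apply Finset.sum_le_sum_of_subset
        intro j hj
        obtain ⟨c, hc, rfl⟩ := Finset.mem_image.mp hj
        exact HookKeyAux.rk_mem s hc


/-- hook power sum bounds: small hooks.
Let `λ/ν` be a skew shape with `n` cells such that `max_{c ∈ λ/ν} h_c < 0.8 n`, and let
`d` be any positive integer.  Then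
`n^{d+1}/(26(d+1)) − 2·(0.8)^d·n^d < Σ_{j=1}^n j^d − Σ_{c ∈ λ/ν} h_c^d
  < n^{d+1}/(d+1) + n^d`. -/
theorem hook_power_sum_bounds_small_hooks (lam nu : YoungDiagram) (hsub : nu ≤ lam)
    (n : ℕ) (hn : (lam.cells \ nu.cells).card = n) (d : ℕ) (hd : 1 ≤ d)
    (hmax : (((lam.cells \ nu.cells).sup fun c =>
        skewHook (lam.cells \ nu.cells) c : ℕ) : ℝ) < 0.8 * (n : ℝ)) :
    (n : ℝ) ^ (d + 1) / (26 * ((d : ℝ) + 1)) - 2 * (0.8 : ℝ) ^ d * (n : ℝ) ^ d <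
      (∑ j ∈ Finset.Icc 1 n, (j : ℝ) ^ d) -
        ∑ c ∈ lam.cells \ nu.cells, (skewHook (lam.cells \ nu.cells) c : ℝ) ^ d ∧
    (∑ j ∈ Finset.Icc 1 n, (j : ℝ) ^ d) -
        ∑ c ∈ lam.cells \ nu.cells, (skewHook (lam.cells \ nu.cells) c : ℝ) ^ d <
      (n : ℝ) ^ (d + 1) / ((d : ℝ) + 1) + (n : ℝ) ^ d := by
  subst hn
  set s := lam.cells \ nu.cells with hs
  set H := s.sup fun c => skewHook s c with hHdef
  -- basic facts
  have hHn : H ≤ s.card :=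
    Finset.sup_le fun c _ => Finset.card_le_card (Finset.filter_subset _ _)
  have hNpos : (0:ℝ) < (s.card:ℝ) := by
    have h0 : (0:ℝ) ≤ (H:ℝ) := Nat.cast_nonneg _
    nlinarith [hmax]
  have hN1 : (1:ℝ) ≤ (s.card:ℝ) := by
    have : 0 < s.card := by exact_mod_cast hNpos
    exact_mod_cast this
  have hDpos : (0:ℝ) < (d:ℝ) + 1 := by positivity
  set P := ∑ j ∈ Finset.Icc 1 s.card, (j:ℝ)^d with hP
  set Q := ∑ c ∈ s, ((skewHook s c : ℕ):ℝ)^d with hQ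
  set M := ∑ j ∈ Finset.Icc 1 s.card, (min (H:ℝ) (j:ℝ))^d with hM
  set R := ∑ j ∈ Finset.Icc (H+1) s.card, (j:ℝ)^d with hR
  -- f1 : Q ≤ M
  have f1 : Q ≤ M := by
    have h := hook_key_sum s d
    have h' := (Nat.cast_le (α := ℝ)).mpr h
    push_cast at h'
    rw [hQ, hM]
    convert h' using 2
  -- f2 : P - M = R - (card - H) * H^d
  have f2 : P - M = R - ((s.card:ℝ) - (H:ℝ)) * (H:ℝ)^d := by
    have e0 : P - M = ∑ j ∈ Finset.Icc 1 s.card, ((j:ℝ)^d - (min (H:ℝ) (j:ℝ))^d) := by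
      rw [hP, hM, Finset.sum_sub_distrib]
    have hsub' : Finset.Icc (H+1) s.card ⊆ Finset.Icc 1 s.card :=
      Finset.Icc_subset_Icc (by omega) le_rfl
    have hv : ∀ j ∈ Finset.Icc 1 s.card, j ∉ Finset.Icc (H+1) s.card →
        ((j:ℝ)^d - (min (H:ℝ) (j:ℝ))^d) = 0 := by
      intro j hj hnj
      rw [Finset.mem_Icc] at hj
      have hjH : j ≤ H := by
        by_contra hc
        exact hnj (Finset.mem_Icc.mpr ⟨by omega, hj.2⟩)
      rw [min_eq_right (by exact_mod_cast hjH : (j:ℝ) ≤ (H:ℝ))]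
      ring
    have e1 : ∑ j ∈ Finset.Icc 1 s.card, ((j:ℝ)^d - (min (H:ℝ) (j:ℝ))^d)
        = ∑ j ∈ Finset.Icc (H+1) s.card, ((j:ℝ)^d - (min (H:ℝ) (j:ℝ))^d) :=
      (Finset.sum_subset hsub' hv).symm
    have e2 : ∑ j ∈ Finset.Icc (H+1) s.card, ((j:ℝ)^d - (min (H:ℝ) (j:ℝ))^d)
        = ∑ j ∈ Finset.Icc (H+1) s.card, ((j:ℝ)^d - (H:ℝ)^d) := by
      refine Finset.sum_congr rfl fun j hj => ?_
      rw [Finset.mem_Icc] at hj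
      rw [min_eq_left (by exact_mod_cast (by omega : H ≤ j) : (H:ℝ) ≤ (j:ℝ))]
    rw [e0, e1, e2, Finset.sum_sub_distrib, Finset.sum_const, Nat.card_Icc]
    have e3 : s.card + 1 - (H+1) = s.card - H := by omega
    rw [e3, nsmul_eq_mul]
    have e4 : ((s.card - H : ℕ):ℝ) = (s.card:ℝ) - (H:ℝ) := by
      exact Nat.cast_sub hHn
    rw [e4, hR]
  -- f3 : cast of hookS_lower
  have f3 : ((s.card:ℝ))^(d+1) ≤ (H:ℝ)^(d+1) + ((d:ℝ)+1) * R := by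
    have h := hookS_lower d H s.card hHn
    have h' := (Nat.cast_le (α := ℝ)).mpr h
    push_cast at h'
    rw [hR]
    convert h' using 2
  -- f4 : analytic bound
  have f4 : (H:ℝ)^d * (((d:ℝ)+1)*(s.card:ℝ) - (d:ℝ)*(H:ℝ)) ≤ 25/26 * (s.card:ℝ)^(d+1) :=
    hookAna d hd (H:ℝ) (s.card:ℝ) (Nat.cast_nonneg _) (le_of_lt hmax)
  -- upper bound pieces
  have fU : ((d:ℝ)+1) * P ≤ (s.card:ℝ)^(d+1) + ((d:ℝ)+1)*(s.card:ℝ)^d := by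
    have h := hookS_upper d s.card hd
    have h' := (Nat.cast_le (α := ℝ)).mpr h
    push_cast at h'
    rw [hP]
    convert h' using 2
  have fQ : (s.card:ℝ) ≤ Q := by
    rw [hQ]
    calc (s.card:ℝ) = ∑ _c ∈ s, (1:ℝ) := by rw [Finset.sum_const, nsmul_eq_mul, mul_one]
    _ ≤ ∑ c ∈ s, ((skewHook s c : ℕ):ℝ)^d := by
        refine Finset.sum_le_sum fun c hc => one_le_pow₀ ?_
        exact_mod_cast skewHook_pos hc
  constructor
  · -- lower bound
    have e1 : R - ((s.card:ℝ) - (H:ℝ))*(H:ℝ)^d ≤ P - Q := by linarith [f1, f2]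
    have e2 : ((d:ℝ)+1)*(R - ((s.card:ℝ)-(H:ℝ))*(H:ℝ)^d) ≤ ((d:ℝ)+1)*(P-Q) :=
      mul_le_mul_of_nonneg_left e1 (le_of_lt hDpos)
    have e4 : (H:ℝ)^(d+1) + ((d:ℝ)+1)*(((s.card:ℝ)-(H:ℝ))*(H:ℝ)^d)
        = (H:ℝ)^d * (((d:ℝ)+1)*(s.card:ℝ) - (d:ℝ)*(H:ℝ)) := by
      rw [pow_succ]; ring
    have key1 : (s.card:ℝ)^(d+1) - 25/26*(s.card:ℝ)^(d+1) ≤ ((d:ℝ)+1) * (P - Q) := by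
      nlinarith [f3, f4, e2]
    have hfrac : (s.card:ℝ)^(d+1)/(26*((d:ℝ)+1)) ≤ P - Q := by
      rw [div_le_iff₀ (by positivity)]
      nlinarith [key1]
    have hpos2 : (0:ℝ) < 2*(0.8:ℝ)^d*(s.card:ℝ)^d := by positivity
    linarith
  · -- upper bound
    have hPle : P ≤ (s.card:ℝ)^(d+1)/((d:ℝ)+1) + (s.card:ℝ)^d := by
      have h5 : (s.card:ℝ)^(d+1)/((d:ℝ)+1) + (s.card:ℝ)^d
          = ((s.card:ℝ)^(d+1) + ((d:ℝ)+1)*(s.card:ℝ)^d)/((d:ℝ)+1) := by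
        field_simp
      rw [h5, le_div_iff₀ hDpos]
      nlinarith [fU]
    linarith
end

section
/- Let λ/ν be a skew shape with n cells such that n ≥ 10 and max_{c∈λ/ν} h_c ≥ 0.8·n, and let d be any positive integer. Then aft(λ/ν)·⌊0.1·n⌋^d/d ≤ Σ_{j=1}^n j^d − Σ_{c∈λ/ν} h_c^d ≤ 2·aft(λ/ν)·(n^d + d·n^{d−1}). -/
open Finset MeasureTheory Filter ProbabilityTheory

namespace HookDev


lemma hook_le_card (s : Finset (ℕ × ℕ)) (c : ℕ × ℕ) : skewHook s c ≤ s.card :=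
  Finset.card_filter_le _ _

lemma one_le_hook {s : Finset (ℕ × ℕ)} {c : ℕ × ℕ} (hc : c ∈ s) : 1 ≤ skewHook s c := by
  have : c ∈ s.filter fun c' => (c'.1 = c.1 ∧ c.2 ≤ c'.2) ∨ (c'.2 = c.2 ∧ c.1 < c'.1) := by
    simp [hc]
  exact Finset.card_pos.2 ⟨c, this⟩

/-- there is always a cell with hook 1 in a nonempty finset of cells -/
lemma exists_corner {s : Finset (ℕ × ℕ)} (hs : s.Nonempty) : ∃ z ∈ s, skewHook s z = 1 := by
  obtain ⟨c, hc, hcmax⟩ := Finset.exists_max_image s (fun c => c.1) hs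
  have ht : (s.filter fun x => x.1 = c.1).Nonempty := ⟨c, by simp [hc]⟩
  obtain ⟨z, hz, hzmax⟩ := Finset.exists_max_image _ (fun c => c.2) ht
  simp only [Finset.mem_filter] at hz
  refine ⟨z, hz.1, ?_⟩
  have : (s.filter fun c' => (c'.1 = z.1 ∧ z.2 ≤ c'.2) ∨ (c'.2 = z.2 ∧ z.1 < c'.1)) = {z} := by
    ext y
    simp only [Finset.mem_filter, Finset.mem_singleton]
    constructor
    · rintro ⟨hy, (⟨h1, h2⟩ | ⟨h1, h2⟩)⟩
      · have hy2 : y.2 ≤ z.2 := hzmax y (by simp [hy, h1, hz.2])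
        have : y.2 = z.2 := le_antisymm hy2 h2
        exact Prod.ext h1 this
      · have := hcmax y hy
        omega
    · intro h; subst h; exact ⟨hz.1, Or.inl ⟨rfl, le_refl _⟩⟩
  unfold skewHook
  rw [this, Finset.card_singleton]

lemma hook_erase_ge {s : Finset (ℕ × ℕ)} (z : ℕ × ℕ) (c : ℕ × ℕ) :
    skewHook s c ≤ skewHook (s.erase z) c + 1 := by
  unfold skewHook
  rw [Finset.filter_erase]
  by_cases hz : z ∈ s.filter fun c' => (c'.1 = c.1 ∧ c.2 ≤ c'.2) ∨ (c'.2 = c.2 ∧ c.1 < c'.1)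
  · have := Finset.card_erase_of_mem hz
    omega
  · rw [Finset.erase_eq_of_notMem hz]
    omega

/-- counting lemma : at most n+1-y cells have hook ≥ y -/
lemma cnt_le : ∀ (k : ℕ) (s : Finset (ℕ × ℕ)), s.card = k → ∀ y : ℕ, 1 ≤ y →
    (s.filter fun c => y ≤ skewHook s c).card ≤ s.card + 1 - y := by
  intro k
  induction k with
  | zero => intro s hs y hy
            rw [Finset.card_eq_zero] at hs; subst hs; simp
  | succ m ih =>
    intro s hs y hy
    rcases eq_or_lt_of_le hy with h1 | h2
    · calc (s.filter fun c => y ≤ skewHook s c).card ≤ s.card := Finset.card_filter_le _ _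
        _ ≤ s.card + 1 - y := by omega
    · -- y ≥ 2
      obtain ⟨z, hzs, hz1⟩ := exists_corner (s := s) (by rw [← Finset.card_pos, hs]; omega)
      have hcard' : (s.erase z).card = m := by
        rw [Finset.card_erase_of_mem hzs, hs]
        omega
      have step1 : (s.filter fun c => y ≤ skewHook s c) ⊆
          ((s.erase z).filter fun c => y - 1 ≤ skewHook (s.erase z) c) := by
        intro c hcmem
        simp only [Finset.mem_filter] at hcmem ⊢
        have hcz : c ≠ z := by
          rintro rfl; omega
        refine ⟨Finset.mem_erase.2 ⟨hcz, hcmem.1⟩, ?_⟩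
        have := hook_erase_ge (s := s) z c
        omega
      have := ih (s.erase z) hcard' (y - 1) (by omega)
      have := Finset.card_le_card step1
      omega




/-- convexity: (y+1)^d + (y-1)^d ≥ 2 y^d for y ≥ 1 -/
lemma pow_convex (d : ℕ) : ∀ y : ℕ, 1 ≤ y → 2 * y ^ d ≤ (y + 1) ^ d + (y - 1) ^ d := by
  induction d with
  | zero => intro y hy; simp
  | succ m ih =>
    intro y hy
    obtain ⟨x, rfl⟩ : ∃ x, y = x + 1 := ⟨y - 1, by omega⟩
    have IH : 2 * (x + 1) ^ m ≤ (x + 2) ^ m + x ^ m := by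
      have h := ih (x + 1) (by omega)
      have e : x + 1 + 1 = x + 2 := by omega
      have e' : x + 1 - 1 = x := by omega
      rw [e, e'] at h
      exact h
    have hab : x ^ m ≤ (x + 2) ^ m := Nat.pow_le_pow_left (by omega) m
    have h1 : (x + 1 + 1) ^ (m + 1) = (x + 2) * (x + 2) ^ m := by
      have e : x + 1 + 1 = x + 2 := by omega
      rw [e]; ring
    have h2 : (x + 1 - 1) ^ (m + 1) = x * x ^ m := by
      have : x + 1 - 1 = x := by omega
      rw [this]; ring
    rw [h1, h2]
    have h3 : (x + 1) ^ (m + 1) = (x + 1) * (x + 1) ^ m := by ring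
    rw [h3]
    have h5 := Nat.mul_le_mul_left (x + 1) IH
    nlinarith [h5, hab]

lemma g_mono (d : ℕ) {y z : ℕ} (hy : 1 ≤ y) (hyz : y ≤ z) :
    y ^ d - (y - 1) ^ d ≤ z ^ d - (z - 1) ^ d := by
  induction z with
  | zero => omega
  | succ m ih =>
    rcases eq_or_lt_of_le hyz with h | h
    · subst h; exact le_rfl
    · have hm : y ≤ m := by omega
      have := ih hm
      -- g(m+1) ≥ g(m) for m ≥ 1
      have hmono : m ^ d - (m - 1) ^ d ≤ (m + 1) ^ d - m ^ d := by
        have h1 : 1 ≤ m := le_trans hy hm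
        have := pow_convex d m h1
        have h2 : (m - 1) ^ d ≤ m ^ d := Nat.pow_le_pow_left (by omega) d
        have h3 : m ^ d ≤ (m + 1) ^ d := Nat.pow_le_pow_left (by omega) d
        omega
      have hms : m + 1 - 1 = m := by omega
      rw [hms]
      omega

lemma pow_succ_ge (δ : ℕ) : ∀ d : ℕ, 1 ≤ d → δ ^ d + d * δ ^ (d - 1) ≤ (δ + 1) ^ d := by
  intro d
  induction d with
  | zero => omega
  | succ m ih =>
    intro _
    rcases Nat.eq_zero_or_pos m with rfl | hm
    · simp
    · have IH := ih hm
      have h1 : (δ + 1) ^ (m + 1) = (δ + 1) * (δ + 1) ^ m := by ring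
      have h2 : δ ^ (m - 1) * δ = δ ^ m := by
        rw [← pow_succ]; congr 1; omega
      have h3 : (δ + 1) * (δ + 1) ^ m ≥ (δ + 1) * (δ ^ m + m * δ ^ (m - 1)) :=
        Nat.mul_le_mul_left _ IH
      have hms : m + 1 - 1 = m := by omega
      rw [h1, hms]
      have h2' : δ * δ ^ (m - 1) = δ ^ m := by rw [mul_comm]; exact h2
      have e1 : (δ + 1) * (δ ^ m + m * δ ^ (m - 1))
          = δ * δ ^ m + m * (δ * δ ^ (m - 1)) + δ ^ m + m * δ ^ (m - 1) := by ring
      have e2 : δ ^ (m + 1) = δ * δ ^ m := by rw [pow_succ, mul_comm]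
      calc δ ^ (m + 1) + (m + 1) * δ ^ m
          ≤ (δ + 1) * (δ ^ m + m * δ ^ (m - 1)) := by rw [e1, h2', e2]; nlinarith [Nat.zero_le (m * δ ^ (m - 1))]
        _ ≤ (δ + 1) * (δ + 1) ^ m := h3

lemma telescope (d : ℕ) (hd : 1 ≤ d) : ∀ y : ℕ, (∑ x ∈ Icc 1 y, (x ^ d - (x - 1) ^ d)) = y ^ d := by
  intro y
  induction y with
  | zero => simp [Nat.zero_pow (show 0 < d by omega)]
  | succ m ih =>
    rw [Finset.sum_Icc_succ_top (by omega), ih]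
    have : m ^ d ≤ (m + 1) ^ d := Nat.pow_le_pow_left (by omega) d
    have hms : m + 1 - 1 = m := by omega
    rw [hms]
    omega

/-- reflection: `∑_{y=δ+1}^{n} (n+1-y) = ∑_{k=1}^{n-δ} k` -/
lemma reflect_sum (δ n : ℕ) :
    (∑ y ∈ Icc (δ + 1) n, (n + 1 - y)) = ∑ k ∈ Icc 1 (n - δ), k := by
  apply Finset.sum_nbij' (fun y => n + 1 - y) (fun k => n + 1 - k)
  · intro y hy; simp only [Finset.mem_Icc] at *; omega
  · intro k hk; simp only [Finset.mem_Icc] at *; omega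
  · intro y hy; simp only [Finset.mem_Icc] at *; omega
  · intro k hk; simp only [Finset.mem_Icc] at *; omega
  · intro y hy; rfl

/-- `∑_{k=1}^{m} (k ∸ δ) = ∑_{k=1}^{m∸δ} k` -/
lemma tsub_sum (δ : ℕ) : ∀ m : ℕ, (∑ k ∈ Icc 1 m, (k - δ)) = ∑ k ∈ Icc 1 (m - δ), k := by
  intro m
  induction m with
  | zero => simp
  | succ m ih =>
    rw [Finset.sum_Icc_succ_top (by omega), ih]
    rcases le_or_gt (m + 1) δ with h | h
    · have h1 : m + 1 - δ = 0 := by omega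
      have h2 : m - δ = 0 := by omega
      rw [h1, h2]; simp
    · have h1 : m + 1 - δ = (m - δ) + 1 := by omega
      rw [h1, Finset.sum_Icc_succ_top (by omega)]




def rnk (t : Finset (ℕ × ℕ)) (κ : ℕ × ℕ → ℕ) (x : ℕ × ℕ) : ℕ :=
  (t.filter fun y => κ x ≤ κ y).card

section rank
variable {t : Finset (ℕ × ℕ)} {κ : ℕ × ℕ → ℕ}
variable (hκ : ∀ x ∈ t, ∀ y ∈ t, κ x = κ y → x = y)

lemma rnk_ge_one {x : ℕ × ℕ} (hx : x ∈ t) : 1 ≤ rnk t κ x :=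
  Finset.card_pos.2 ⟨x, Finset.mem_filter.2 ⟨hx, le_rfl⟩⟩

lemma rnk_le_card {x : ℕ × ℕ} : rnk t κ x ≤ t.card := Finset.card_filter_le _ _

lemma rnk_lt {x y : ℕ × ℕ} (hx : x ∈ t) (hxy : κ x < κ y) : rnk t κ y < rnk t κ x := by
  apply Finset.card_lt_card
  constructor
  · intro z hz
    simp only [Finset.mem_filter] at hz ⊢
    exact ⟨hz.1, by omega⟩
  · intro hsub
    have := hsub (Finset.mem_filter.2 ⟨hx, le_rfl⟩)
    simp only [Finset.mem_filter] at this
    omega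

include hκ in
lemma rnk_injOn : ∀ x ∈ t, ∀ y ∈ t, rnk t κ x = rnk t κ y → x = y := by
  intro x hx y hy hr
  rcases lt_trichotomy (κ x) (κ y) with h | h | h
  · have := rnk_lt hx h; omega
  · exact hκ x hx y hy h
  · have := rnk_lt hy h; omega

include hκ in
lemma rnk_image : t.image (rnk t κ) = Icc 1 t.card := by
  apply Finset.eq_of_subset_of_card_le
  · intro k hk
    simp only [Finset.mem_image] at hk
    obtain ⟨x, hx, rfl⟩ := hk
    simp only [Finset.mem_Icc]
    exact ⟨rnk_ge_one hx, rnk_le_card⟩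
  · rw [Nat.card_Icc, Finset.card_image_of_injOn]
    · omega
    · intro x hx y hy h
      exact rnk_injOn hκ x hx y hy h

include hκ in
lemma sum_rnk (F : ℕ → ℕ) : (∑ x ∈ t, F (rnk t κ x)) = ∑ k ∈ Icc 1 t.card, F k := by
  rw [← rnk_image hκ, Finset.sum_image (fun x hx y hy h => rnk_injOn hκ x hx y hy h)]

end rank




lemma sum_pow_Icc (d n : ℕ) (hd : 1 ≤ d) :
    (∑ j ∈ Icc 1 n, j ^ d) = ∑ y ∈ Icc 1 n, (y ^ d - (y - 1) ^ d) * (n + 1 - y) := by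
  rw [Finset.sum_congr rfl fun j _ => (telescope d hd j).symm]
  rw [Finset.sum_comm' (s' := fun y => Icc y n) (t' := Icc 1 n)
    (by intro x y; simp only [Finset.mem_Icc]; omega)]
  apply Finset.sum_congr rfl
  intro y _
  rw [Finset.sum_const, Nat.card_Icc, smul_eq_mul, mul_comm]

lemma sum_hook_pow (s : Finset (ℕ × ℕ)) (d : ℕ) (hd : 1 ≤ d) :
    (∑ c ∈ s, (skewHook s c) ^ d) =
      ∑ y ∈ Icc 1 s.card, (y ^ d - (y - 1) ^ d) * (s.filter fun c => y ≤ skewHook s c).card := by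
  rw [Finset.sum_congr rfl fun c _ => (telescope d hd (skewHook s c)).symm]
  rw [Finset.sum_comm' (s' := fun y => s.filter fun c => y ≤ skewHook s c) (t' := Icc 1 s.card)
    (by
      intro c y
      simp only [Finset.mem_Icc, Finset.mem_filter]
      constructor
      · rintro ⟨hc, h1, h2⟩
        exact ⟨⟨hc, h2⟩, h1, le_trans h2 (hook_le_card s c)⟩
      · rintro ⟨⟨hc, h2⟩, h1, _⟩
        exact ⟨hc, h1, h2⟩)]
  apply Finset.sum_congr rfl
  intro y _
  rw [Finset.sum_const, smul_eq_mul, mul_comm]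

lemma sum_cnt_tail (s : Finset (ℕ × ℕ)) (δ : ℕ) :
    (∑ y ∈ Icc (δ + 1) s.card, (s.filter fun c => y ≤ skewHook s c).card) =
      ∑ c ∈ s, (skewHook s c - δ) := by
  have : ∀ y, (s.filter fun c => y ≤ skewHook s c).card
      = ∑ c ∈ s.filter fun c => y ≤ skewHook s c, 1 := by simp
  rw [Finset.sum_congr rfl fun y _ => this y]
  rw [Finset.sum_comm' (s' := fun c => Icc (δ + 1) (skewHook s c)) (t' := s)
    (by
      intro y c
      simp only [Finset.mem_Icc, Finset.mem_filter]
      constructor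
      · rintro ⟨⟨h1, _⟩, hc, h2⟩
        exact ⟨⟨h1, h2⟩, hc⟩
      · rintro ⟨⟨h1, h2⟩, hc⟩
        exact ⟨⟨h1, le_trans h2 (hook_le_card s c)⟩, hc, h2⟩)]
  apply Finset.sum_congr rfl
  intro c _
  rw [Finset.sum_const, smul_eq_mul, mul_one, Nat.card_Icc]
  omega

lemma cross_key (G G1 C M : ℕ) (h1 : G1 ≤ G) (h2 : C ≤ M) :
    G * C + G1 * M ≤ G * M + G1 * C := by nlinarith

/-- MAIN lower-bound skeleton -/
lemma main_lower (s : Finset (ℕ × ℕ)) (d δ : ℕ) (hd : 1 ≤ d) (hδn : δ ≤ s.card) :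
    (∑ c ∈ s, (skewHook s c) ^ d) + ((δ+1) ^ d - δ ^ d) * (∑ k ∈ Icc 1 s.card, (k - δ))
      ≤ (∑ j ∈ Icc 1 s.card, j ^ d)
        + ((δ+1) ^ d - δ ^ d) * (∑ c ∈ s, (skewHook s c - δ)) := by
  set n := s.card with hn
  set g : ℕ → ℕ := fun y => y ^ d - (y - 1) ^ d with hg
  have hgδ : g (δ + 1) = (δ+1) ^ d - δ ^ d := by simp [hg]
  rw [← hgδ, ← sum_cnt_tail s δ, ← hn]
  rw [sum_pow_Icc d n hd, sum_hook_pow s d hd, ← hn]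
  rw [tsub_sum δ n, ← reflect_sum δ n]
  -- split Icc 1 n at δ
  have hdisj : Disjoint (Icc 1 δ) (Icc (δ + 1) n) := by
    rw [Finset.disjoint_left]
    intro x hx hx'
    simp only [Finset.mem_Icc] at hx hx'
    omega
  have hun : Icc 1 δ ∪ Icc (δ + 1) n = Icc 1 n := by
    ext x
    simp only [Finset.mem_union, Finset.mem_Icc]
    omega
  have hsplit : ∀ F : ℕ → ℕ, (∑ y ∈ Icc 1 n, F y)
      = (∑ y ∈ Icc 1 δ, F y) + ∑ y ∈ Icc (δ + 1) n, F y := by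
    intro F
    rw [← hun, Finset.sum_union hdisj]
  rw [hsplit fun y => g y * (s.filter fun c => y ≤ skewHook s c).card,
      hsplit fun y => g y * (n + 1 - y)]
  have part1 : (∑ y ∈ Icc 1 δ, g y * (s.filter fun c => y ≤ skewHook s c).card)
      ≤ ∑ y ∈ Icc 1 δ, g y * (n + 1 - y) := by
    apply Finset.sum_le_sum
    intro y hy
    simp only [Finset.mem_Icc] at hy
    exact Nat.mul_le_mul_left _ (cnt_le s.card s rfl y hy.1)
  have part2 : (∑ y ∈ Icc (δ + 1) n, g y * (s.filter fun c => y ≤ skewHook s c).card)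
        + g (δ + 1) * (∑ y ∈ Icc (δ + 1) n, (n + 1 - y))
      ≤ (∑ y ∈ Icc (δ + 1) n, g y * (n + 1 - y))
        + g (δ + 1) * (∑ y ∈ Icc (δ + 1) n, (s.filter fun c => y ≤ skewHook s c).card) := by
    rw [Finset.mul_sum, Finset.mul_sum, ← Finset.sum_add_distrib, ← Finset.sum_add_distrib]
    apply Finset.sum_le_sum
    intro y hy
    simp only [Finset.mem_Icc] at hy
    exact cross_key (g y) (g (δ + 1)) _ _ (g_mono d (by omega) hy.1)
      (cnt_le s.card s rfl y (by omega))
  omega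





section struct

variable (s : Finset (ℕ × ℕ)) (c0 : ℕ × ℕ)

def armF : Finset (ℕ × ℕ) := s.filter fun x => x.1 = c0.1 ∧ c0.2 ≤ x.2
def legF : Finset (ℕ × ℕ) := s.filter fun x => x.2 = c0.2 ∧ c0.1 < x.1
def hkS : Finset (ℕ × ℕ) :=
  s.filter fun x => (x.1 = c0.1 ∧ c0.2 ≤ x.2) ∨ (x.2 = c0.2 ∧ c0.1 < x.1)
def othF : Finset (ℕ × ℕ) := s \ hkS s c0

lemma hkS_eq : hkS s c0 = armF s c0 ∪ legF s c0 := Finset.filter_or _ _ _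

lemma arm_leg_disj : Disjoint (armF s c0) (legF s c0) := by
  rw [Finset.disjoint_left]
  intro x hx hy
  simp only [armF, legF, Finset.mem_filter] at hx hy
  omega

lemma h0_split : skewHook s c0 = (armF s c0).card + (legF s c0).card := by
  have : skewHook s c0 = (hkS s c0).card := rfl
  rw [this, hkS_eq, Finset.card_union_of_disjoint (arm_leg_disj s c0)]

lemma c0_mem_arm (hc0 : c0 ∈ s) : c0 ∈ armF s c0 := by
  simp [armF, hc0]

lemma hkS_subset : hkS s c0 ⊆ s := Finset.filter_subset _ _

lemma oth_card : (othF s c0).card = s.card - skewHook s c0 := by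
  rw [othF, Finset.card_sdiff_of_subset (hkS_subset s c0)]; rfl

/-- generic split of a hook into row part and column part -/
lemma hook_split (x : ℕ × ℕ) :
    skewHook s x = (s.filter fun y => y.1 = x.1 ∧ x.2 ≤ y.2).card
      + (s.filter fun y => y.2 = x.2 ∧ x.1 < y.1).card := by
  have h1 : skewHook s x = ((s.filter fun y => y.1 = x.1 ∧ x.2 ≤ y.2)
      ∪ (s.filter fun y => y.2 = x.2 ∧ x.1 < y.1)).card := by
    rw [← Finset.filter_or]; rfl
  rw [h1, Finset.card_union_of_disjoint]
  rw [Finset.disjoint_left]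
  intro y hy hy'
  simp only [Finset.mem_filter] at hy hy'
  omega

/-- hook of an arm cell = its rank in the arm + number of cells below it -/
lemma arm_hook {x : ℕ × ℕ} (hx : x ∈ armF s c0) :
    skewHook s x = rnk (armF s c0) (fun z => z.2) x
      + (s.filter fun y => y.2 = x.2 ∧ x.1 < y.1).card := by
  simp only [armF, Finset.mem_filter] at hx
  rw [hook_split s x]
  congr 1
  have : rnk (armF s c0) (fun z => z.2) x = ((armF s c0).filter fun y => x.2 ≤ y.2).card := rfl
  rw [this]
  congr 1
  ext y
  simp only [armF, Finset.mem_filter, Finset.filter_filter]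
  constructor
  · rintro ⟨hy, h1, h2⟩
    exact ⟨hy, ⟨by omega, by omega⟩, h2⟩
  · rintro ⟨hy, ⟨h1, h2⟩, h3⟩
    exact ⟨hy, by omega, h3⟩

lemma arm_inj : ∀ x ∈ armF s c0, ∀ y ∈ armF s c0, x.2 = y.2 → x = y := by
  intro x hx y hy h
  simp only [armF, Finset.mem_filter] at hx hy
  exact Prod.ext (by omega) h

lemma rnk_c0 (hc0 : c0 ∈ s) : rnk (armF s c0) (fun z => z.2) c0 = (armF s c0).card := by
  have : rnk (armF s c0) (fun z => z.2) c0 = ((armF s c0).filter fun y => c0.2 ≤ y.2).card := rfl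
  rw [this]
  congr 1
  apply Finset.filter_true_of_mem
  intro y hy
  simp only [armF, Finset.mem_filter] at hy
  exact hy.2.2

lemma below_c0 : (s.filter fun y => y.2 = c0.2 ∧ c0.1 < y.1) = legF s c0 := rfl

/-- the cells strictly below an arm cell (≠ c0) are "other" cells -/
lemma below_subset_oth {x : ℕ × ℕ} (hx : x ∈ armF s c0) (hxc : x ≠ c0) :
    (s.filter fun y => y.2 = x.2 ∧ x.1 < y.1) ⊆ othF s c0 := by
  simp only [armF, Finset.mem_filter] at hx
  have hx2 : c0.2 < x.2 := by
    rcases eq_or_lt_of_le hx.2.2 with h | h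
    · exact absurd (Prod.ext hx.2.1 h.symm) hxc
    · exact h
  intro y hy
  simp only [Finset.mem_filter] at hy
  simp only [othF, hkS, Finset.mem_sdiff, Finset.mem_filter]
  refine ⟨hy.1, ?_⟩
  push_neg
  intro _
  constructor
  · intro h; omega
  · intro h; omega


/-- leg cells: injectivity by row -/
lemma leg_inj : ∀ x ∈ legF s c0, ∀ y ∈ legF s c0, x.1 = y.1 → x = y := by
  intro x hx y hy h
  simp only [legF, Finset.mem_filter] at hx hy
  exact Prod.ext h (by omega)

lemma leg_hook {x : ℕ × ℕ} (hx : x ∈ legF s c0) :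
    skewHook s x = rnk (legF s c0) (fun z => z.1) x
      + (s.filter fun y => y.1 = x.1 ∧ c0.2 < y.2).card := by
  simp only [legF, Finset.mem_filter] at hx
  rw [hook_split s x]
  have hrow : (s.filter fun y => y.1 = x.1 ∧ x.2 ≤ y.2)
      = insert x (s.filter fun y => y.1 = x.1 ∧ c0.2 < y.2) := by
    ext y
    simp only [Finset.mem_filter, Finset.mem_insert]
    constructor
    · rintro ⟨hy, h1, h2⟩
      rcases eq_or_lt_of_le h2 with h | h
      · left; exact (Prod.ext h1 h.symm).symm ▸ rfl
      · right; exact ⟨hy, h1, by omega⟩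
    · rintro (rfl | ⟨hy, h1, h2⟩)
      · exact ⟨hx.1, rfl, le_rfl⟩
      · exact ⟨hy, h1, by omega⟩
  have hxnot : x ∉ (s.filter fun y => y.1 = x.1 ∧ c0.2 < y.2) := by
    simp only [Finset.mem_filter]
    push_neg
    intro _ _
    omega
  have hcol : (s.filter fun y => y.2 = x.2 ∧ x.1 < y.1)
      = (legF s c0).filter fun y => x.1 < y.1 := by
    ext y
    simp only [legF, Finset.mem_filter, Finset.filter_filter]
    constructor
    · rintro ⟨hy, h1, h2⟩
      exact ⟨hy, ⟨by omega, by omega⟩, h2⟩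
    · rintro ⟨hy, ⟨h1, h2⟩, h3⟩
      exact ⟨hy, by omega, h3⟩
  have hrnk : rnk (legF s c0) (fun z => z.1) x
      = ((legF s c0).filter fun y => x.1 < y.1).card + 1 := by
    have e0 : rnk (legF s c0) (fun z => z.1) x
        = ((legF s c0).filter fun y => x.1 ≤ y.1).card := rfl
    have e1 : (legF s c0).filter (fun y => x.1 ≤ y.1)
        = insert x ((legF s c0).filter fun y => x.1 < y.1) := by
      ext y
      simp only [legF, Finset.mem_filter, Finset.mem_insert, Finset.filter_filter]
      constructor
      · rintro ⟨hy, ⟨h1, h2⟩, h3⟩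
        rcases eq_or_lt_of_le h3 with h | h
        · left
          exact (Prod.ext h.symm (by omega)).symm ▸ rfl
        · right; exact ⟨hy, ⟨h1, h2⟩, h⟩
      · rintro (rfl | ⟨hy, ⟨h1, h2⟩, h3⟩)
        · exact ⟨hx.1, ⟨hx.2.1, hx.2.2⟩, le_rfl⟩
        · exact ⟨hy, ⟨h1, h2⟩, le_of_lt h3⟩
    have e2 : x ∉ (legF s c0).filter fun y => x.1 < y.1 := by
      simp only [legF, Finset.mem_filter]
      push_neg
      intros
      omega
    rw [e0, e1, Finset.card_insert_of_notMem e2]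
  rw [hrow, Finset.card_insert_of_notMem hxnot, hcol, hrnk]
  omega

lemma eps_subset_oth {x : ℕ × ℕ} (hx : x ∈ legF s c0) :
    (s.filter fun y => y.1 = x.1 ∧ c0.2 < y.2) ⊆ othF s c0 := by
  simp only [legF, Finset.mem_filter] at hx
  intro y hy
  simp only [Finset.mem_filter] at hy
  simp only [othF, hkS, Finset.mem_sdiff, Finset.mem_filter]
  refine ⟨hy.1, ?_⟩
  push_neg
  intro _
  constructor
  · intro h; omega
  · intro h; omega

/-- sum over the arm of (hook - δ) -/
lemma arm_cut (hc0 : c0 ∈ s) (δ : ℕ) :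
    (∑ x ∈ armF s c0, (skewHook s x - δ))
      ≤ (skewHook s c0 - δ) + (∑ k ∈ Icc 1 ((armF s c0).card - 1), (k - δ))
        + (othF s c0).card := by
  have hmem := c0_mem_arm s c0 hc0
  have ha : 1 ≤ (armF s c0).card := Finset.card_pos.2 ⟨c0, hmem⟩
  rw [← Finset.sum_erase_add _ _ hmem]
  have step1 : (∑ x ∈ (armF s c0).erase c0, (skewHook s x - δ))
      ≤ (∑ x ∈ (armF s c0).erase c0, (rnk (armF s c0) (fun z => z.2) x - δ))
        + ∑ x ∈ (armF s c0).erase c0, (s.filter fun y => y.2 = x.2 ∧ x.1 < y.1).card := by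
    rw [← Finset.sum_add_distrib]
    apply Finset.sum_le_sum
    intro x hx
    rw [arm_hook s c0 (Finset.mem_of_mem_erase hx)]
    omega
  have step2 : (∑ x ∈ (armF s c0).erase c0, (rnk (armF s c0) (fun z => z.2) x - δ))
      = ∑ k ∈ Icc 1 ((armF s c0).card - 1), (k - δ) := by
    have e3 : (∑ x ∈ armF s c0, (rnk (armF s c0) (fun z => z.2) x - δ))
        = ∑ k ∈ Icc 1 ((armF s c0).card), (k - δ) :=
      sum_rnk (arm_inj s c0) (fun k => k - δ)
    have e1 : (∑ x ∈ (armF s c0).erase c0, (rnk (armF s c0) (fun z => z.2) x - δ))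
        + (rnk (armF s c0) (fun z => z.2) c0 - δ)
        = ∑ x ∈ armF s c0, (rnk (armF s c0) (fun z => z.2) x - δ) :=
      Finset.sum_erase_add _ _ hmem
    rw [rnk_c0 s c0 hc0] at e1
    obtain ⟨m, hm⟩ : ∃ m, (armF s c0).card = m + 1 := ⟨(armF s c0).card - 1, by omega⟩
    rw [hm] at e1 e3 ⊢
    simp only [Nat.add_sub_cancel]
    rw [Finset.sum_Icc_succ_top (by omega)] at e3
    omega
  have step3 : (∑ x ∈ (armF s c0).erase c0, (s.filter fun y => y.2 = x.2 ∧ x.1 < y.1).card)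
      ≤ (othF s c0).card := by
    rw [← Finset.card_biUnion]
    · apply Finset.card_le_card
      apply Finset.biUnion_subset.2
      intro x hx
      exact below_subset_oth s c0 (Finset.mem_of_mem_erase hx) (Finset.ne_of_mem_erase hx)
    · intro x hx y hy hxy
      rw [Function.onFun, Finset.disjoint_left]
      intro z hz hz'
      simp only [Finset.mem_filter] at hz hz'
      exact hxy (arm_inj s c0 x (Finset.mem_of_mem_erase hx) y (Finset.mem_of_mem_erase hy)
        (by omega))
  omega

/-- sum over the leg of (hook - δ) -/
lemma leg_cut (δ : ℕ) :
    (∑ x ∈ legF s c0, (skewHook s x - δ))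
      ≤ (∑ k ∈ Icc 1 ((legF s c0).card), (k - δ)) + (othF s c0).card := by
  have step1 : (∑ x ∈ legF s c0, (skewHook s x - δ))
      ≤ (∑ x ∈ legF s c0, (rnk (legF s c0) (fun z => z.1) x - δ))
        + ∑ x ∈ legF s c0, (s.filter fun y => y.1 = x.1 ∧ c0.2 < y.2).card := by
    rw [← Finset.sum_add_distrib]
    apply Finset.sum_le_sum
    intro x hx
    rw [leg_hook s c0 hx]
    omega
  have step2 : (∑ x ∈ legF s c0, (rnk (legF s c0) (fun z => z.1) x - δ))
      = ∑ k ∈ Icc 1 ((legF s c0).card), (k - δ) := sum_rnk (leg_inj s c0) (fun k => k - δ)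
  have step3 : (∑ x ∈ legF s c0, (s.filter fun y => y.1 = x.1 ∧ c0.2 < y.2).card)
      ≤ (othF s c0).card := by
    rw [← Finset.card_biUnion]
    · apply Finset.card_le_card
      apply Finset.biUnion_subset.2
      intro x hx
      exact eps_subset_oth s c0 hx
    · intro x hx y hy hxy
      rw [Function.onFun, Finset.disjoint_left]
      intro z hz hz'
      simp only [Finset.mem_filter] at hz hz'
      exact hxy (leg_inj s c0 x hx y hy (by omega))
  omega


lemma arm_hook_ge {x : ℕ × ℕ} (hx : x ∈ armF s c0) :
    rnk (armF s c0) (fun z => z.2) x ≤ skewHook s x := by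
  rw [arm_hook s c0 hx]
  omega

def vertF : Finset (ℕ × ℕ) := insert c0 (legF s c0)

lemma vert_card : (vertF s c0).card = (legF s c0).card + 1 := by
  rw [vertF, Finset.card_insert_of_notMem]
  simp only [legF, Finset.mem_filter]
  push_neg
  intros
  omega

lemma vert_col (hc0 : c0 ∈ s) {x : ℕ × ℕ} (hx : x ∈ vertF s c0) :
    x ∈ s ∧ x.2 = c0.2 ∧ c0.1 ≤ x.1 := by
  simp only [vertF, legF, Finset.mem_insert, Finset.mem_filter] at hx
  rcases hx with rfl | hx
  · exact ⟨hc0, rfl, le_rfl⟩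
  · exact ⟨hx.1, hx.2.1, le_of_lt hx.2.2⟩

lemma vert_inj (hc0 : c0 ∈ s) : ∀ x ∈ vertF s c0, ∀ y ∈ vertF s c0, x.1 = y.1 → x = y := by
  intro x hx y hy h
  have h1 := vert_col s c0 hc0 hx
  have h2 := vert_col s c0 hc0 hy
  exact Prod.ext h (by omega)

lemma vert_hook_ge (hc0 : c0 ∈ s) {x : ℕ × ℕ} (hx : x ∈ vertF s c0) :
    rnk (vertF s c0) (fun z => z.1) x ≤ skewHook s x := by
  obtain ⟨hxs, hx2, hx1⟩ := vert_col s c0 hc0 hx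
  rw [hook_split s x]
  have e1 : (vertF s c0).filter (fun y => x.1 ≤ y.1)
      = insert x ((vertF s c0).filter fun y => x.1 < y.1) := by
    ext y
    simp only [Finset.mem_insert, Finset.mem_filter]
    constructor
    · rintro ⟨hy, h3⟩
      rcases eq_or_lt_of_le h3 with h | h
      · left; exact (vert_inj s c0 hc0 y hy x hx h.symm)
      · right; exact ⟨hy, h⟩
    · rintro (rfl | ⟨hy, h3⟩)
      · exact ⟨hx, le_rfl⟩
      · exact ⟨hy, le_of_lt h3⟩
  have e2 : x ∉ (vertF s c0).filter fun y => x.1 < y.1 := by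
    simp only [Finset.mem_filter]
    push_neg
    intros
    omega
  have hrnk : rnk (vertF s c0) (fun z => z.1) x
      = ((vertF s c0).filter fun y => x.1 < y.1).card + 1 := by
    have e0 : rnk (vertF s c0) (fun z => z.1) x
        = ((vertF s c0).filter fun y => x.1 ≤ y.1).card := rfl
    rw [e0, e1, Finset.card_insert_of_notMem e2]
  rw [hrnk]
  have hsub : (vertF s c0).filter (fun y => x.1 < y.1)
      ⊆ s.filter fun y => y.2 = x.2 ∧ x.1 < y.1 := by
    intro y hy
    simp only [Finset.mem_filter] at hy ⊢
    obtain ⟨hys, hy2, _⟩ := vert_col s c0 hc0 hy.1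
    exact ⟨hys, by omega, hy.2⟩
  have h1 : ((vertF s c0).filter fun y => x.1 < y.1).card
      ≤ (s.filter fun y => y.2 = x.2 ∧ x.1 < y.1).card := Finset.card_le_card hsub
  have h2 : 1 ≤ (s.filter fun y => y.1 = x.1 ∧ x.2 ≤ y.2).card :=
    Finset.card_pos.2 ⟨x, Finset.mem_filter.2 ⟨hxs, rfl, le_rfl⟩⟩
  omega

lemma sum_pow_ge_arm (d : ℕ) :
    (∑ k ∈ Icc 1 ((armF s c0).card), k ^ d) ≤ ∑ c ∈ s, (skewHook s c) ^ d := by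
  rw [← sum_rnk (arm_inj s c0) (fun k => k ^ d)]
  calc (∑ x ∈ armF s c0, (rnk (armF s c0) (fun z => z.2) x) ^ d)
      ≤ ∑ x ∈ armF s c0, (skewHook s x) ^ d := by
        apply Finset.sum_le_sum
        intro x hx
        exact Nat.pow_le_pow_left (arm_hook_ge s c0 hx) d
    _ ≤ ∑ c ∈ s, (skewHook s c) ^ d := by
        apply Finset.sum_le_sum_of_subset
        exact Finset.filter_subset _ _

lemma sum_pow_ge_vert (hc0 : c0 ∈ s) (d : ℕ) :
    (∑ k ∈ Icc 1 ((legF s c0).card + 1), k ^ d) ≤ ∑ c ∈ s, (skewHook s c) ^ d := by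
  rw [← vert_card s c0, ← sum_rnk (vert_inj s c0 hc0) (fun k => k ^ d)]
  calc (∑ x ∈ vertF s c0, (rnk (vertF s c0) (fun z => z.1) x) ^ d)
      ≤ ∑ x ∈ vertF s c0, (skewHook s x) ^ d := by
        apply Finset.sum_le_sum
        intro x hx
        exact Nat.pow_le_pow_left (vert_hook_ge s c0 hc0 hx) d
    _ ≤ ∑ c ∈ s, (skewHook s c) ^ d := by
        apply Finset.sum_le_sum_of_subset
        intro y hy
        simp only [vertF, legF, Finset.mem_insert, Finset.mem_filter] at hy
        rcases hy with rfl | hy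
        · exact hc0
        · exact hy.1

/-- every row count is at most the maximal hook -/
lemma row_le_maxhook {c : ℕ × ℕ} (hc : c ∈ s)
    (hmax : ∀ x ∈ s, skewHook s x ≤ skewHook s c0) :
    (s.filter fun y => y.1 = c.1).card ≤ skewHook s c0 := by
  obtain ⟨z, hz, hzmin⟩ := Finset.exists_min_image (s.filter fun y => y.1 = c.1)
    (fun y => y.2) ⟨c, Finset.mem_filter.2 ⟨hc, rfl⟩⟩
  simp only [Finset.mem_filter] at hz
  have hsub : (s.filter fun y => y.1 = c.1)
      ⊆ s.filter fun y => (y.1 = z.1 ∧ z.2 ≤ y.2) ∨ (y.2 = z.2 ∧ z.1 < y.1) := by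
    intro y hy
    have hy' := hy
    simp only [Finset.mem_filter] at hy ⊢
    exact ⟨hy.1, Or.inl ⟨by omega, hzmin y hy'⟩⟩
  calc (s.filter fun y => y.1 = c.1).card ≤ skewHook s z := Finset.card_le_card hsub
    _ ≤ skewHook s c0 := hmax z hz.1

lemma col_le_maxhook {c : ℕ × ℕ} (hc : c ∈ s)
    (hmax : ∀ x ∈ s, skewHook s x ≤ skewHook s c0) :
    (s.filter fun y => y.2 = c.2).card ≤ skewHook s c0 := by
  obtain ⟨z, hz, hzmin⟩ := Finset.exists_min_image (s.filter fun y => y.2 = c.2)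
    (fun y => y.1) ⟨c, Finset.mem_filter.2 ⟨hc, rfl⟩⟩
  simp only [Finset.mem_filter] at hz
  have hsub : (s.filter fun y => y.2 = c.2)
      ⊆ s.filter fun y => (y.1 = z.1 ∧ z.2 ≤ y.2) ∨ (y.2 = z.2 ∧ z.1 < y.1) := by
    intro y hy
    have hy' := hy
    simp only [Finset.mem_filter] at hy ⊢
    refine ⟨hy.1, ?_⟩
    rcases eq_or_lt_of_le (hzmin y hy') with h | h
    · exact Or.inl ⟨h.symm, by omega⟩
    · exact Or.inr ⟨by omega, h⟩
  calc (s.filter fun y => y.2 = c.2).card ≤ skewHook s z := Finset.card_le_card hsub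
    _ ≤ skewHook s c0 := hmax z hz.1

/-- every row count is at most max(a, l+1) + q -/
lemma row_le_K {c : ℕ × ℕ} :
    (s.filter fun y => y.1 = c.1).card
      ≤ max ((armF s c0).card) ((legF s c0).card + 1) + (othF s c0).card := by
  rcases eq_or_ne c.1 c0.1 with h | h
  · have hsub : (s.filter fun y => y.1 = c.1) ⊆ armF s c0 ∪ othF s c0 := by
      intro y hy
      simp only [Finset.mem_filter] at hy
      simp only [armF, othF, hkS, Finset.mem_union, Finset.mem_sdiff, Finset.mem_filter]
      rcases le_or_gt c0.2 y.2 with h2 | h2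
      · exact Or.inl ⟨hy.1, by omega, h2⟩
      · refine Or.inr ⟨hy.1, ?_⟩
        push_neg
        intro _
        constructor
        · intro _; omega
        · intro _; omega
    calc (s.filter fun y => y.1 = c.1).card ≤ (armF s c0 ∪ othF s c0).card :=
          Finset.card_le_card hsub
      _ ≤ (armF s c0).card + (othF s c0).card := Finset.card_union_le _ _
      _ ≤ _ := by omega
  · have hsub : (s.filter fun y => y.1 = c.1) ⊆ insert (c.1, c0.2) (othF s c0) := by
      intro y hy
      simp only [Finset.mem_filter] at hy
      simp only [Finset.mem_insert, othF, hkS, Finset.mem_sdiff, Finset.mem_filter]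
      rcases eq_or_ne y.2 c0.2 with h2 | h2
      · left; exact Prod.ext hy.2 h2
      · refine Or.inr ⟨hy.1, ?_⟩
        push_neg
        intro _
        constructor
        · intro h3; omega
        · intro h3; omega
    calc (s.filter fun y => y.1 = c.1).card ≤ (insert (c.1, c0.2) (othF s c0)).card :=
          Finset.card_le_card hsub
      _ ≤ (othF s c0).card + 1 := Finset.card_insert_le (c.1, c0.2) (othF s c0)
      _ ≤ _ := by omega

lemma col_le_K {c : ℕ × ℕ} (hc0 : c0 ∈ s) :
    (s.filter fun y => y.2 = c.2).card
      ≤ max ((armF s c0).card) ((legF s c0).card + 1) + (othF s c0).card := by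
  have ha : 1 ≤ (armF s c0).card := Finset.card_pos.2 ⟨c0, c0_mem_arm s c0 hc0⟩
  rcases eq_or_ne c.2 c0.2 with h | h
  · have hsub : (s.filter fun y => y.2 = c.2) ⊆ vertF s c0 ∪ othF s c0 := by
      intro y hy
      simp only [Finset.mem_filter] at hy
      simp only [vertF, legF, othF, hkS, Finset.mem_union, Finset.mem_insert,
        Finset.mem_sdiff, Finset.mem_filter]
      rcases lt_trichotomy y.1 c0.1 with h2 | h2 | h2
      · refine Or.inr ⟨hy.1, ?_⟩
        push_neg
        intro _
        constructor
        · intro _; omega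
        · intro _; omega
      · left; left; exact Prod.ext h2 (by omega)
      · left; right; exact ⟨hy.1, by omega, h2⟩
    calc (s.filter fun y => y.2 = c.2).card ≤ (vertF s c0 ∪ othF s c0).card :=
          Finset.card_le_card hsub
      _ ≤ (vertF s c0).card + (othF s c0).card := Finset.card_union_le _ _
      _ ≤ _ := by rw [vert_card]; omega
  · have hsub : (s.filter fun y => y.2 = c.2) ⊆ insert (c0.1, c.2) (othF s c0) := by
      intro y hy
      simp only [Finset.mem_filter] at hy
      simp only [Finset.mem_insert, othF, hkS, Finset.mem_sdiff, Finset.mem_filter]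
      rcases eq_or_ne y.1 c0.1 with h2 | h2
      · left; exact Prod.ext h2 hy.2
      · refine Or.inr ⟨hy.1, ?_⟩
        push_neg
        intro _
        constructor
        · intro h3; omega
        · intro h3; omega
    calc (s.filter fun y => y.2 = c.2).card ≤ (insert (c0.1, c.2) (othF s c0)).card :=
          Finset.card_le_card hsub
      _ ≤ (othF s c0).card + 1 := Finset.card_insert_le (c0.1, c.2) (othF s c0)
      _ ≤ _ := by omega

/-- a cell not sharing a row or column with c0 has a small hook -/
lemma oth_hook_small {o : ℕ × ℕ} (ho : o ∈ s) (hr : o.1 ≠ c0.1) (hc : o.2 ≠ c0.2) :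
    skewHook s o + skewHook s c0 ≤ s.card + 2 := by
  set A := s.filter fun c' => (c'.1 = o.1 ∧ o.2 ≤ c'.2) ∨ (c'.2 = o.2 ∧ o.1 < c'.1) with hA
  set B := s.filter fun c' => (c'.1 = c0.1 ∧ c0.2 ≤ c'.2) ∨ (c'.2 = c0.2 ∧ c0.1 < c'.1) with hB
  have hAB : skewHook s o + skewHook s c0 = (A ∪ B).card + (A ∩ B).card := by
    rw [Finset.card_union_add_card_inter]; rfl
  have h1 : (A ∪ B).card ≤ s.card := by
    apply Finset.card_le_card
    intro y hy
    rcases Finset.mem_union.1 hy with hy | hy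
    · exact (Finset.mem_filter.1 hy).1
    · exact (Finset.mem_filter.1 hy).1
  have h2 : (A ∩ B) ⊆ {(o.1, c0.2), (c0.1, o.2)} := by
    intro y hy
    rw [Finset.mem_inter] at hy
    obtain ⟨hyA, hyB⟩ := hy
    simp only [hA, hB, Finset.mem_filter] at hyA hyB
    simp only [Finset.mem_insert, Finset.mem_singleton]
    rcases hyA.2 with ⟨e1, e2⟩ | ⟨e1, e2⟩ <;> rcases hyB.2 with ⟨f1, f2⟩ | ⟨f1, f2⟩
    · omega
    · left; exact Prod.ext e1 f1
    · right; exact Prod.ext f1 e1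
    · omega
  have h3 : (A ∩ B).card ≤ 2 := by
    calc (A ∩ B).card ≤ ({(o.1, c0.2), (c0.1, o.2)} : Finset (ℕ × ℕ)).card :=
          Finset.card_le_card h2
      _ ≤ 2 := Finset.card_insert_le _ _ |>.trans (by simp)
  omega

end struct





section young

variable {lam nu : YoungDiagram} {c0 : ℕ × ℕ}

lemma mem_s_iff {x : ℕ × ℕ} : x ∈ lam.cells \ nu.cells ↔ x ∈ lam ∧ x ∉ nu := by
  simp [Finset.mem_sdiff, YoungDiagram.mem_cells]

lemma noleft (hc0 : c0 ∈ lam.cells \ nu.cells)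
    (hmax : ∀ x ∈ lam.cells \ nu.cells,
      skewHook (lam.cells \ nu.cells) x ≤ skewHook (lam.cells \ nu.cells) c0)
    {x : ℕ × ℕ} (hx : x ∈ lam.cells \ nu.cells) (hx1 : x.1 = c0.1) (hx2 : x.2 < c0.2) :
    False := by
  set s := lam.cells \ nu.cells with hs
  have hxlam : x ∈ lam ∧ x ∉ nu := mem_s_iff.1 hx
  -- row part of hook of x contains x and the whole arm
  have harm : insert x (armF s c0) ⊆ s.filter fun y => y.1 = x.1 ∧ x.2 ≤ y.2 := by
    intro y hy
    rcases Finset.mem_insert.1 hy with rfl | hy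
    · exact Finset.mem_filter.2 ⟨hx, rfl, le_rfl⟩
    · simp only [armF, Finset.mem_filter] at hy
      exact Finset.mem_filter.2 ⟨hy.1, by omega, by omega⟩
  have hxarm : x ∉ armF s c0 := by
    simp only [armF, Finset.mem_filter]
    push_neg
    intro _ _
    omega
  -- column part of hook of x contains a shifted copy of the leg
  have hleg : (legF s c0).image (fun y => (y.1, x.2))
      ⊆ s.filter fun y => y.2 = x.2 ∧ x.1 < y.1 := by
    intro z hz
    simp only [Finset.mem_image] at hz
    obtain ⟨y, hy, rfl⟩ := hz
    simp only [legF, Finset.mem_filter] at hy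
    obtain ⟨hyS, hy2, hy1⟩ := hy
    have hylam : y ∈ lam ∧ y ∉ nu := mem_s_iff.1 hyS
    apply Finset.mem_filter.2
    refine ⟨mem_s_iff.2 ⟨?_, ?_⟩, rfl, by simpa using by omega⟩
    · have : ((y.1, x.2) : ℕ × ℕ) ∈ lam := by
        apply lam.up_left_mem (le_refl y.1) (le_of_lt (by omega : x.2 < y.2))
        have := hylam.1
        simpa using this
      exact this
    · intro hmem
      apply hxlam.2
      have : ((x.1, x.2) : ℕ × ℕ) ∈ nu := nu.up_left_mem (by omega) (le_refl x.2) hmem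
      simpa using this
  -- count
  have c1 : (armF s c0).card + 1 ≤ (s.filter fun y => y.1 = x.1 ∧ x.2 ≤ y.2).card := by
    have := Finset.card_le_card harm
    rw [Finset.card_insert_of_notMem hxarm] at this
    omega
  have c2 : (legF s c0).card ≤ (s.filter fun y => y.2 = x.2 ∧ x.1 < y.1).card := by
    have hinj : ∀ y ∈ legF s c0, ∀ z ∈ legF s c0,
        (fun y => (y.1, x.2)) y = (fun y => (y.1, x.2)) z → y = z := by
      intro y hy z hz h
      simp only [Prod.mk.injEq] at h
      exact leg_inj s c0 y hy z hz h.1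
    calc (legF s c0).card = ((legF s c0).image (fun y => (y.1, x.2))).card :=
          (Finset.card_image_of_injOn hinj).symm
      _ ≤ _ := Finset.card_le_card hleg
  have hhk := hook_split s x
  have hh0 := h0_split s c0
  have := hmax x hx
  omega

lemma noup (hc0 : c0 ∈ lam.cells \ nu.cells)
    (hmax : ∀ x ∈ lam.cells \ nu.cells,
      skewHook (lam.cells \ nu.cells) x ≤ skewHook (lam.cells \ nu.cells) c0)
    {x : ℕ × ℕ} (hx : x ∈ lam.cells \ nu.cells) (hx2 : x.2 = c0.2) (hx1 : x.1 < c0.1) :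
    False := by
  set s := lam.cells \ nu.cells with hs
  have hxlam : x ∈ lam ∧ x ∉ nu := mem_s_iff.1 hx
  have hleg : insert c0 (legF s c0) ⊆ s.filter fun y => y.2 = x.2 ∧ x.1 < y.1 := by
    intro y hy
    rcases Finset.mem_insert.1 hy with rfl | hy
    · exact Finset.mem_filter.2 ⟨hc0, by omega, by omega⟩
    · simp only [legF, Finset.mem_filter] at hy
      exact Finset.mem_filter.2 ⟨hy.1, by omega, by omega⟩
  have hc0leg : c0 ∉ legF s c0 := by
    simp only [legF, Finset.mem_filter]
    push_neg
    intro _ _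
    omega
  have harm : (armF s c0).image (fun y => (x.1, y.2))
      ⊆ s.filter fun y => y.1 = x.1 ∧ x.2 ≤ y.2 := by
    intro z hz
    simp only [Finset.mem_image] at hz
    obtain ⟨y, hy, rfl⟩ := hz
    simp only [armF, Finset.mem_filter] at hy
    obtain ⟨hyS, hy1, hy2⟩ := hy
    have hylam : y ∈ lam ∧ y ∉ nu := mem_s_iff.1 hyS
    apply Finset.mem_filter.2
    refine ⟨mem_s_iff.2 ⟨?_, ?_⟩, rfl, by simpa using by omega⟩
    · have : ((x.1, y.2) : ℕ × ℕ) ∈ lam := by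
        apply lam.up_left_mem (le_of_lt (by omega : x.1 < y.1)) (le_refl y.2)
        have := hylam.1
        simpa using this
      exact this
    · intro hmem
      apply hxlam.2
      have : ((x.1, x.2) : ℕ × ℕ) ∈ nu := nu.up_left_mem (le_refl x.1) (by omega) hmem
      simpa using this
  have c1 : (legF s c0).card + 1 ≤ (s.filter fun y => y.2 = x.2 ∧ x.1 < y.1).card := by
    have := Finset.card_le_card hleg
    rw [Finset.card_insert_of_notMem hc0leg] at this
    omega
  have c2 : (armF s c0).card ≤ (s.filter fun y => y.1 = x.1 ∧ x.2 ≤ y.2).card := by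
    have hinj : ∀ y ∈ armF s c0, ∀ z ∈ armF s c0,
        (fun y => (x.1, y.2)) y = (fun y => (x.1, y.2)) z → y = z := by
      intro y hy z hz h
      simp only [Prod.mk.injEq] at h
      exact arm_inj s c0 y hy z hz h.2
    calc (armF s c0).card = ((armF s c0).image (fun y => (x.1, y.2))).card :=
          (Finset.card_image_of_injOn hinj).symm
      _ ≤ _ := Finset.card_le_card harm
  have hhk := hook_split s x
  have hh0 := h0_split s c0
  have := hmax x hx
  omega

/-- other cells share no row or column with c0 -/
lemma oth_pos (hc0 : c0 ∈ lam.cells \ nu.cells)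
    (hmax : ∀ x ∈ lam.cells \ nu.cells,
      skewHook (lam.cells \ nu.cells) x ≤ skewHook (lam.cells \ nu.cells) c0)
    {o : ℕ × ℕ} (ho : o ∈ othF (lam.cells \ nu.cells) c0) :
    o.1 ≠ c0.1 ∧ o.2 ≠ c0.2 := by
  set s := lam.cells \ nu.cells with hs
  simp only [othF, hkS, Finset.mem_sdiff, Finset.mem_filter] at ho
  obtain ⟨hos, hno⟩ := ho
  push_neg at hno
  obtain ⟨hA, hB⟩ := hno hos
  constructor
  · intro h
    exact noleft hc0 hmax hos h (hA h)
  · intro h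
    have h1 : o.1 ≤ c0.1 := hB h
    have hne : o.1 ≠ c0.1 := by
      intro he
      have := hA he
      omega
    exact noup hc0 hmax hos h (by omega)

end young




lemma tri2 : ∀ m : ℕ, 2 * (∑ k ∈ Icc 1 m, k) = m * (m + 1) := by
  intro m
  induction m with
  | zero => simp
  | succ k ih =>
    rw [Finset.sum_Icc_succ_top (by omega)]
    ring_nf
    ring_nf at ih
    omega

lemma castmax (a b : ℕ) : ((a - b : ℕ) : ℤ) = max ((a : ℤ) - (b : ℤ)) 0 := by
  rcases le_or_gt b a with h | h
  · rw [max_eq_left (by omega)]; omega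
  · rw [max_eq_right (by omega)]; omega

lemma star_int (n δ q A1 l p' : ℤ)
    (hδ1 : 1 ≤ δ) (h10 : 10*δ ≤ n) (h10' : n ≤ 10*δ + 9)
    (hq0 : 0 ≤ q) (hq : 5*q ≤ n)
    (hA1 : 0 ≤ A1) (hl : 0 ≤ l) (hsum : A1 + l + q + 1 = n)
    (hp1 : p' ≤ A1) (hp2 : p' ≤ l) (hp0 : 0 ≤ p') :
    2*(n - q - δ) + (max (A1-δ) 0)*((max (A1-δ) 0)+1) + (max (l-δ) 0)*((max (l-δ) 0)+1)
      + 4*q + 2*q*(q+1) + 2*(p'+q)*δ ≤ (n-δ)*(n-δ+1) := by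
  rcases le_or_gt δ A1 with h1 | h1 <;> rcases le_or_gt δ l with h2 | h2
  · rw [max_eq_left (by omega), max_eq_left (by omega)]
    nlinarith [sq_nonneg (A1 - l), mul_nonneg hq0 (show (0:ℤ) ≤ δ by omega), sq_nonneg (q - δ),
      mul_nonneg (sub_nonneg.2 h1) (sub_nonneg.2 h2)]
  · rw [max_eq_left (by omega), max_eq_right (by omega)]
    nlinarith [mul_nonneg hq0 (show (0:ℤ) ≤ δ by omega), sq_nonneg (q - δ), mul_nonneg hq0 hq0,
      mul_nonneg hl (show (0:ℤ) ≤ δ by omega)]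
  · rw [max_eq_right (by omega), max_eq_left (by omega)]
    nlinarith [mul_nonneg hq0 (show (0:ℤ) ≤ δ by omega), sq_nonneg (q - δ), mul_nonneg hq0 hq0,
      mul_nonneg hA1 (show (0:ℤ) ≤ δ by omega)]
  · rw [max_eq_right (by omega), max_eq_right (by omega)]
    nlinarith [mul_nonneg hq0 (show (0:ℤ) ≤ δ by omega), sq_nonneg (q - δ), mul_nonneg hq0 hq0]

lemma star_nat (n δ q a1 l p' : ℕ)
    (hδ1 : 1 ≤ δ) (h10 : 10*δ ≤ n) (h10' : n ≤ 10*δ + 9) (hq : 5*q ≤ n)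
    (hsum : a1 + l + q + 1 = n) (hp : p' = min a1 l) :
    (n - q - δ) + (∑ k ∈ Icc 1 a1, (k - δ)) + (∑ k ∈ Icc 1 l, (k - δ))
      + 2*q + q*((q+2) - δ) + (p'+q)*δ
      ≤ ∑ k ∈ Icc 1 n, (k - δ) := by
  set SA := (∑ k ∈ Icc 1 a1, (k - δ)) with hSA
  set SL := (∑ k ∈ Icc 1 l, (k - δ)) with hSL
  set SN := (∑ k ∈ Icc 1 n, (k - δ)) with hSN
  have tA : 2 * SA = (a1 - δ) * ((a1 - δ) + 1) := by rw [hSA, tsub_sum]; exact tri2 _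
  have tL : 2 * SL = (l - δ) * ((l - δ) + 1) := by rw [hSL, tsub_sum]; exact tri2 _
  have tN : 2 * SN = (n - δ) * ((n - δ) + 1) := by rw [hSN, tsub_sum]; exact tri2 _
  have key := star_int (n : ℤ) (δ : ℤ) (q : ℤ) (a1 : ℤ) (l : ℤ) (p' : ℤ)
    (by omega) (by omega) (by omega) (by omega) (by omega) (by omega) (by omega)
    (by omega) (by omega) (by omega) (by omega)
  rw [← castmax a1 δ, ← castmax l δ] at key
  have tAz : 2 * (SA : ℤ) = ((a1 - δ : ℕ) : ℤ) * (((a1 - δ : ℕ) : ℤ) + 1) := by exact_mod_cast tA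
  have tLz : 2 * (SL : ℤ) = ((l - δ : ℕ) : ℤ) * (((l - δ : ℕ) : ℤ) + 1) := by exact_mod_cast tL
  have tNz : 2 * (SN : ℤ) = ((n - δ : ℕ) : ℤ) * (((n - δ : ℕ) : ℤ) + 1) := by exact_mod_cast tN
  have hNz : ((n - δ : ℕ) : ℤ) = (n : ℤ) - (δ : ℤ) := by omega
  have hnqz : ((n - q - δ : ℕ) : ℤ) = (n : ℤ) - q - δ := by omega
  have hw : ((q : ℕ) : ℤ) * (((q+2) - δ : ℕ) : ℤ) ≤ (q : ℤ) * ((q:ℤ)+1) := by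
    have h1 : (((q+2) - δ : ℕ) : ℤ) ≤ (q : ℤ) + 1 := by omega
    exact mul_le_mul_of_nonneg_left h1 (by omega)
  rw [← Nat.cast_le (α := ℤ)]
  push_cast [hnqz]
  rw [hNz] at tNz
  linarith [key, tAz, tLz, tNz, hw, hnqz]


end HookDev
open HookDev

set_option maxHeartbeats 1600000 in
/-- hook power sum bounds: a large hook.
Let `λ/ν` be a skew shape with `n ≥ 10` cells such that `max_{c ∈ λ/ν} h_c ≥ 0.8 n`, and
let `d` be any positive integer.  Then
`aft(λ/ν)·⌊0.1 n⌋^d / d ≤ Σ_{j=1}^n j^d − Σ_{c ∈ λ/ν} h_c^d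
  ≤ 2·aft(λ/ν)·(n^d + d·n^{d−1})`. -/
theorem hook_power_sum_bounds_large_hook (lam nu : YoungDiagram) (hsub : nu ≤ lam)
    (n : ℕ) (hn : (lam.cells \ nu.cells).card = n) (hn10 : 10 ≤ n)
    (d : ℕ) (hd : 1 ≤ d)
    (hmax : (0.8 : ℝ) * (n : ℝ) ≤ (((lam.cells \ nu.cells).sup fun c =>
        skewHook (lam.cells \ nu.cells) c : ℕ) : ℝ)) :
    (skewAft (lam.cells \ nu.cells) : ℝ) * ((⌊(0.1 : ℝ) * (n : ℝ)⌋₊ : ℝ) ^ d) / (d : ℝ) ≤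
      (∑ j ∈ Finset.Icc 1 n, (j : ℝ) ^ d) -
        ∑ c ∈ lam.cells \ nu.cells, (skewHook (lam.cells \ nu.cells) c : ℝ) ^ d ∧
    (∑ j ∈ Finset.Icc 1 n, (j : ℝ) ^ d) -
        ∑ c ∈ lam.cells \ nu.cells, (skewHook (lam.cells \ nu.cells) c : ℝ) ^ d ≤
      2 * (skewAft (lam.cells \ nu.cells) : ℝ) *
        ((n : ℝ) ^ d + (d : ℝ) * (n : ℝ) ^ (d - 1)) := by
  classical
  set s := lam.cells \ nu.cells with hsdef
  have hcard : s.card = n := hn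
  have hne : s.Nonempty := Finset.card_pos.1 (by omega)
  obtain ⟨c0, hc0, hsup⟩ := Finset.exists_mem_eq_sup s hne (fun c => skewHook s c)
  have hmax' : ∀ x ∈ s, skewHook s x ≤ skewHook s c0 := fun x hx => hsup ▸ Finset.le_sup hx
  set h0 := skewHook s c0 with hh0def
  set a := (armF s c0).card with hadef
  set l := (legF s c0).card with hldef
  set q := (othF s c0).card with hqdef
  have hh0 : h0 = a + l := h0_split s c0
  have ha1 : 1 ≤ a := Finset.card_pos.2 ⟨c0, c0_mem_arm s c0 hc0⟩
  have hh0n : h0 ≤ n := hcard ▸ hook_le_card s c0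
  have hq : q = n - h0 := by rw [hqdef, oth_card s c0, hcard]
  -- 0.8n ≤ h0
  have h45 : 4 * n ≤ 5 * h0 := by
    rw [hsup] at hmax
    have : ((4 * n : ℕ) : ℝ) ≤ ((5 * h0 : ℕ) : ℝ) := by push_cast; nlinarith [hmax]
    exact_mod_cast this
  set δ := n / 10 with hδdef
  have hδfloor : ⌊(0.1 : ℝ) * (n : ℝ)⌋₊ = δ := by
    rw [show (0.1 : ℝ) * (n : ℝ) = (n : ℝ) / ((10 : ℕ) : ℝ) by push_cast; ring]
    rw [Nat.floor_div_natCast, Nat.floor_natCast]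
  have hδ1 : 1 ≤ δ := by omega
  have h10a : 10 * δ ≤ n := by omega
  have h10b : n ≤ 10 * δ + 9 := by omega
  have h5q : 5 * q ≤ n := by omega
  -- aft facts
  have hm1 : rowColMax s ≤ h0 := by
    apply max_le
    · exact Finset.sup_le fun c hc => row_le_maxhook s c0 hc hmax'
    · exact Finset.sup_le fun c hc => col_le_maxhook s c0 hc hmax'
  have hm2 : rowColMax s ≤ max a (l + 1) + q := by
    apply max_le
    · exact Finset.sup_le fun c _ => row_le_K s c0
    · exact Finset.sup_le fun c _ => col_le_K s c0 hc0
  have hm3 : a ≤ rowColMax s := by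
    refine le_trans ?_ (le_max_left _ _)
    refine le_trans ?_ (Finset.le_sup hc0)
    apply Finset.card_le_card
    intro x hx
    simp only [armF, Finset.mem_filter] at hx
    exact Finset.mem_filter.2 ⟨hx.1, hx.2.1⟩
  have hm4 : l + 1 ≤ rowColMax s := by
    refine le_trans ?_ (le_max_right _ _)
    refine le_trans ?_ (Finset.le_sup hc0)
    have : vertF s c0 ⊆ s.filter fun y => y.2 = c0.2 := by
      intro x hx
      simp only [vertF, legF, Finset.mem_insert, Finset.mem_filter] at hx
      rcases hx with rfl | hx
      · exact Finset.mem_filter.2 ⟨hc0, rfl⟩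
      · exact Finset.mem_filter.2 ⟨hx.1, hx.2.1⟩
    have hvc : (vertF s c0).card = l + 1 := by
      rw [vertF, Finset.card_insert_of_notMem]
      simp only [legF, Finset.mem_filter]
      push_neg
      intros
      omega
    calc l + 1 = (vertF s c0).card := hvc.symm
      _ ≤ _ := Finset.card_le_card this
  have haft : skewAft s = n - rowColMax s := by rw [skewAft, hcard]
  set aft := skewAft s with haftdef
  have haft1 : q ≤ aft := by omega
  have haft2 : min (a - 1) l ≤ aft := by
    have : max a (l + 1) + min (a - 1) l = a + l := by omega
    omega
  have haft3 : aft ≤ min (a - 1) l + q := by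
    have h5 : max a (l + 1) ≤ rowColMax s := max_le hm3 hm4
    have : max a (l + 1) + min (a - 1) l = a + l := by omega
    omega
  -- ===== LOWER BOUND (ℕ) =====
  -- the cut bound
  have oth_bound : (∑ x ∈ othF s c0, (skewHook s x - δ)) ≤ q * ((q + 2) - δ) := by
    have := Finset.sum_le_card_nsmul (othF s c0) (fun x => skewHook s x - δ) ((q + 2) - δ) ?_
    · rwa [smul_eq_mul] at this
    · intro o ho
      have hos : o ∈ s := Finset.mem_sdiff.1 ho |>.1
      obtain ⟨hr, hc⟩ := oth_pos (lam := lam) (nu := nu) hc0 hmax' ho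
      have hsm := oth_hook_small s c0 hos hr hc
      rw [hcard, ← hh0def] at hsm
      show skewHook s o - δ ≤ (q + 2) - δ
      omega
  have cut : (∑ c ∈ s, (skewHook s c - δ))
      ≤ ((n - q - δ) + (∑ k ∈ Icc 1 (a - 1), (k - δ)) + (∑ k ∈ Icc 1 l, (k - δ))
        + 2*q + q*((q+2) - δ)) := by
    have hsplit : (∑ x ∈ othF s c0, (skewHook s x - δ)) + (∑ x ∈ hkS s c0, (skewHook s x - δ))
        = ∑ c ∈ s, (skewHook s c - δ) := Finset.sum_sdiff (hkS_subset s c0)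
    have hsplit2 : (∑ x ∈ hkS s c0, (skewHook s x - δ))
        = (∑ x ∈ armF s c0, (skewHook s x - δ)) + (∑ x ∈ legF s c0, (skewHook s x - δ)) := by
      rw [hkS_eq s c0, Finset.sum_union (arm_leg_disj s c0)]
    have h1 := arm_cut s c0 hc0 δ
    have h2 := leg_cut s c0 δ
    rw [← hh0def, ← hadef, ← hqdef] at h1
    rw [← hldef, ← hqdef] at h2
    have heq : h0 - δ = n - q - δ := by omega
    rw [heq] at h1
    omega
  -- star inequality
  have star := star_nat n δ q (a - 1) l (min (a - 1) l) hδ1 h10a h10b h5q (by omega) rfl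
  -- combine
  have c1 : (∑ c ∈ s, (skewHook s c - δ)) + (min (a - 1) l + q) * δ
      ≤ ∑ k ∈ Icc 1 n, (k - δ) := by
    have := cut
    have := star
    omega
  set G := ((δ + 1) ^ d - δ ^ d) with hGdef
  have ML := main_lower s d δ hd (by omega)
  rw [hcard, ← hGdef] at ML
  have c2 : G * ((∑ c ∈ s, (skewHook s c - δ)) + (min (a - 1) l + q) * δ)
      ≤ G * (∑ k ∈ Icc 1 n, (k - δ)) := Nat.mul_le_mul_left _ c1
  rw [Nat.mul_add] at c2
  have lowN : (∑ c ∈ s, (skewHook s c) ^ d) + G * ((min (a - 1) l + q) * δ)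
      ≤ ∑ j ∈ Icc 1 n, j ^ d := by omega
  have hGge : d * δ ^ (d - 1) ≤ G := by
    have := pow_succ_ge δ d hd
    have h2 : δ ^ d ≤ (δ + 1) ^ d := Nat.pow_le_pow_left (by omega) d
    omega
  have hpow : δ ^ (d - 1) * δ = δ ^ d := by
    rw [← pow_succ]
    congr 1
    omega
  have lowN2 : (∑ c ∈ s, (skewHook s c) ^ d) + d * aft * δ ^ d ≤ ∑ j ∈ Icc 1 n, j ^ d := by
    have e1 : d * aft * δ ^ d = (d * δ ^ (d - 1)) * (aft * δ) := by
      rw [← hpow]; ring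
    have e2 : (d * δ ^ (d - 1)) * (aft * δ) ≤ G * ((min (a - 1) l + q) * δ) :=
      Nat.mul_le_mul hGge (Nat.mul_le_mul_right _ (by omega))
    omega
  -- ===== UPPER BOUND (ℕ) =====
  set K := max a (l + 1) with hKdef
  have hKn : K ≤ n := by omega
  have upsplit : (∑ j ∈ Icc 1 n, j ^ d)
      = (∑ j ∈ Icc 1 K, j ^ d) + ∑ j ∈ Icc (K + 1) n, j ^ d := by
    have hdisj : Disjoint (Icc 1 K) (Icc (K + 1) n) := by
      rw [Finset.disjoint_left]
      intro x hx hx'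
      simp only [Finset.mem_Icc] at hx hx'
      omega
    have hun : Icc 1 K ∪ Icc (K + 1) n = Icc 1 n := by
      ext x
      simp only [Finset.mem_union, Finset.mem_Icc]
      omega
    rw [← hun, Finset.sum_union hdisj]
  have upK : (∑ j ∈ Icc 1 K, j ^ d) ≤ ∑ c ∈ s, (skewHook s c) ^ d := by
    rcases max_cases a (l + 1) with ⟨hK, _⟩ | ⟨hK, _⟩
    · rw [hKdef, hK]; exact sum_pow_ge_arm s c0 d
    · rw [hKdef, hK]; exact sum_pow_ge_vert s c0 hc0 d
  have uptail : (∑ j ∈ Icc (K + 1) n, j ^ d) ≤ (min (a - 1) l + q) * n ^ d := by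
    have h1 : (∑ j ∈ Icc (K + 1) n, j ^ d) ≤ (Icc (K + 1) n).card * n ^ d := by
      calc (∑ j ∈ Icc (K + 1) n, j ^ d) ≤ ∑ _j ∈ Icc (K + 1) n, n ^ d := by
            apply Finset.sum_le_sum
            intro j hj
            simp only [Finset.mem_Icc] at hj
            exact Nat.pow_le_pow_left hj.2 d
        _ = (Icc (K + 1) n).card * n ^ d := by rw [Finset.sum_const, smul_eq_mul]
    rw [Nat.card_Icc] at h1
    have he : n + 1 - (K + 1) = min (a - 1) l + q := by omega
    rw [he] at h1
    exact h1
  have upN : (∑ j ∈ Icc 1 n, j ^ d)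
      ≤ (∑ c ∈ s, (skewHook s c) ^ d) + (min (a - 1) l + q) * n ^ d := by omega
  -- ===== CAST TO ℝ =====
  rw [hδfloor]
  have castSn : ((∑ j ∈ Icc 1 n, j ^ d : ℕ) : ℝ) = ∑ j ∈ Icc 1 n, (j : ℝ) ^ d := by push_cast; rfl
  have castSh : ((∑ c ∈ s, (skewHook s c) ^ d : ℕ) : ℝ)
      = ∑ c ∈ s, ((skewHook s c : ℕ) : ℝ) ^ d := by push_cast; rfl
  have lowR : ((d : ℝ) * aft * (δ : ℝ) ^ d)
      ≤ (∑ j ∈ Icc 1 n, (j : ℝ) ^ d) - ∑ c ∈ s, ((skewHook s c : ℕ) : ℝ) ^ d := by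
    rw [← castSn, ← castSh]
    have := lowN2
    have hcast : ((((∑ c ∈ s, (skewHook s c) ^ d) + d * aft * δ ^ d : ℕ)) : ℝ)
        ≤ ((∑ j ∈ Icc 1 n, j ^ d : ℕ) : ℝ) := by exact_mod_cast this
    push_cast at hcast
    push_cast
    linarith
  have upR : (∑ j ∈ Icc 1 n, (j : ℝ) ^ d) - (∑ c ∈ s, ((skewHook s c : ℕ) : ℝ) ^ d)
      ≤ ((min (a - 1) l + q : ℕ) : ℝ) * (n : ℝ) ^ d := by
    rw [← castSn, ← castSh]
    have hcast : ((∑ j ∈ Icc 1 n, j ^ d : ℕ) : ℝ)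
        ≤ (((∑ c ∈ s, (skewHook s c) ^ d) + (min (a - 1) l + q) * n ^ d : ℕ) : ℝ) := by
      exact_mod_cast upN
    push_cast at hcast
    push_cast
    linarith
  constructor
  · -- lower bound
    have hd1 : (1 : ℝ) ≤ (d : ℝ) := by exact_mod_cast hd
    have hnn : (0 : ℝ) ≤ (aft : ℝ) * (δ : ℝ) ^ d := by positivity
    have step : (aft : ℝ) * (δ : ℝ) ^ d / (d : ℝ) ≤ (aft : ℝ) * (δ : ℝ) ^ d :=
      div_le_self hnn hd1
    have step2 : (aft : ℝ) * (δ : ℝ) ^ d ≤ (d : ℝ) * aft * (δ : ℝ) ^ d := by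
      nlinarith [hnn]
    linarith [lowR]
  · -- upper bound
    have h2aft : ((min (a - 1) l + q : ℕ) : ℝ) ≤ 2 * (aft : ℝ) := by
      have : min (a - 1) l + q ≤ 2 * aft := by omega
      exact_mod_cast this
    have hpos : (0 : ℝ) ≤ (n : ℝ) ^ d := by positivity
    have hpos2 : (0 : ℝ) ≤ (d : ℝ) * (n : ℝ) ^ (d - 1) := by positivity
    calc (∑ j ∈ Icc 1 n, (j : ℝ) ^ d) - (∑ c ∈ s, ((skewHook s c : ℕ) : ℝ) ^ d)
        ≤ ((min (a - 1) l + q : ℕ) : ℝ) * (n : ℝ) ^ d := upR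
      _ ≤ 2 * (aft : ℝ) * (n : ℝ) ^ d := by
          apply mul_le_mul_of_nonneg_right h2aft hpos
      _ ≤ 2 * (aft : ℝ) * ((n : ℝ) ^ d + (d : ℝ) * (n : ℝ) ^ (d - 1)) := by
          have : (0 : ℝ) ≤ (aft : ℝ) := by positivity
          nlinarith
end
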